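/- arXiv:2303.02541 — 5 statements merged into one kernel-verified Lean document; each statement's English description precedes it below -/
import Mathlib

section
/- Assume 𝕍 is continuous and T-invariant. Then for each P ∈ Θ there exists a T-invariant probability measure P' ∈ Θ₀ such that P'(A) = P(A) for every A in the invariant σ-algebra 𝓘. -/
/-!
Average the iterates of `P`: the Cesàro means `Qₙ = (n+1)⁻¹ ∑_{k ≤ n} P ∘ T^{-k}` are dominated
by `𝕍` because `𝕍` is `T`-invariant, so they lie in `Θ`, and they agree with `P` on invariant sets.
A setwise limit of `Qₙ` along an ultrafilter finer than `atTop` exists by compactness of `[0, ∞]`;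
it is finitely additive, and being dominated by the continuous `𝕍` it is σ-additive. Since
`Qₙ(T⁻¹A) - Qₙ(A) = O(1/n)`, the limit is `T`-invariant.
-/

open MeasureTheory Filter Set Function
open scoped ENNReal Topology

namespace MeasureTheory

variable {Ω : Type*} [MeasurableSpace Ω]

theorem isSetRing_measurableSet : IsSetRing {s : Set Ω | MeasurableSet s} :=
  ⟨.empty, fun _ _ => .union, fun _ _ => .diff⟩

def IsContinuousAtEmpty (V : Set Ω → ℝ≥0∞) : Prop :=
  ∀ A : ℕ → Set Ω, (∀ n, MeasurableSet (A n)) → Antitone A → (⋂ n, A n) = ∅ →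
    Tendsto (fun n => V (A n)) atTop (𝓝 0)

theorem exists_isProbabilityMeasure_eq_of_tendsto {ι : Type*} {l : Filter ι} [l.NeBot]
    {μ : ι → Measure Ω} (hμ : ∀ i, IsProbabilityMeasure (μ i)) {V : Set Ω → ℝ≥0∞}
    (hμV : ∀ i A, MeasurableSet A → μ i A ≤ V A) (hV : IsContinuousAtEmpty V)
    {m : Set Ω → ℝ≥0∞} (hm : ∀ A, MeasurableSet A → Tendsto (fun i => μ i A) l (𝓝 (m A))) :
    ∃ ν : Measure Ω, IsProbabilityMeasure ν ∧ ∀ A, MeasurableSet A → ν A = m A := by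
  have m_empty : m ∅ = 0 := tendsto_nhds_unique (hm ∅ .empty) (by simp)
  have m_univ : m univ = 1 := tendsto_nhds_unique (hm univ .univ) (by simp [(hμ _).measure_univ])
  have m_union {s t : Set Ω} (hs : MeasurableSet s) (ht : MeasurableSet t) (hst : Disjoint s t) :
      m (s ∪ t) = m s + m t :=
    tendsto_nhds_unique (hm _ (hs.union ht)) <| by
      simpa only [measure_union hst ht] using (hm s hs).add (hm t ht)
  have m_le_V : ∀ A, MeasurableSet A → m A ≤ V A := fun A hA =>
    le_of_tendsto (hm A hA) (.of_forall fun i => hμV i A hA)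
  have m_le_one : ∀ A, MeasurableSet A → m A ≤ 1 := fun A hA =>
    m_univ ▸ le_of_tendsto_of_tendsto (hm A hA) (hm univ .univ)
      (.of_forall fun i => measure_mono (subset_univ A))
  let c : AddContent ℝ≥0∞ {s : Set Ω | MeasurableSet s} :=
    isSetRing_measurableSet.addContent_of_union m m_empty m_union
  have c_iUnion := addContent_iUnion_eq_sum_of_tendsto_zero isSetRing_measurableSet c
    (fun s hs => ((m_le_one s hs).trans_lt ENNReal.one_lt_top).ne)
    fun s hs hanti hempty => tendsto_of_tendsto_of_tendsto_of_le_of_le tendsto_const_nhds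
      (hV s hs hanti hempty) (fun _ => zero_le) fun n => m_le_V _ (hs n)
  let ν := Measure.ofMeasurable (fun A _ => m A) m_empty fun f hf hdisj =>
    c_iUnion hf (.iUnion hf) hdisj
  have hν : ∀ A, MeasurableSet A → ν A = m A := fun A hA => Measure.ofMeasurable_apply A hA
  exact ⟨ν, ⟨(hν univ .univ).trans m_univ⟩, hν⟩

theorem exists_isProbabilityMeasure_tendsto {ι : Type*} (U : Ultrafilter ι)
    {μ : ι → Measure Ω} (hμ : ∀ i, IsProbabilityMeasure (μ i)) {V : Set Ω → ℝ≥0∞}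
    (hμV : ∀ i A, MeasurableSet A → μ i A ≤ V A) (hV : IsContinuousAtEmpty V) :
    ∃ ν : Measure Ω, IsProbabilityMeasure ν ∧
      ∀ A, MeasurableSet A → Tendsto (fun i => μ i A) U (𝓝 (ν A)) := by
  have hlim (A : Set Ω) : Tendsto (fun i => μ i A) U (𝓝 (U.map (μ · A)).lim) := by
    rw [Tendsto, ← Ultrafilter.coe_map]
    exact Ultrafilter.le_nhds_lim (U.map (μ · A))
  obtain ⟨ν, hν, hνm⟩ := exists_isProbabilityMeasure_eq_of_tendsto hμ hμV hV fun A _ => hlim A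
  exact ⟨ν, hν, fun A hA => hνm A hA ▸ hlim A⟩

section Cesaro

variable {T : Ω → Ω} {P : Measure Ω} {A : Set Ω}

theorem apply_preimage_iterate {β : Type*} {f : Set Ω → β} (hT : Measurable T)
    (hf : ∀ A, MeasurableSet A → f (T ⁻¹' A) = f A) (k : ℕ) (hA : MeasurableSet A) :
    f (T^[k] ⁻¹' A) = f A := by
  induction k with
  | zero => rfl
  | succ k ih => rw [iterate_succ, preimage_comp, hf _ (hT.iterate k hA), ih]

variable (T P) in
noncomputable def cesaroAverage (n : ℕ) : Measure Ω :=
  ((n + 1 : ℕ) : ℝ≥0∞)⁻¹ • ∑ k ∈ Finset.range (n + 1), P.map T^[k]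

theorem cesaroAverage_apply (hT : Measurable T) (n : ℕ) (hA : MeasurableSet A) :
    cesaroAverage T P n A =
      ((n + 1 : ℕ) : ℝ≥0∞)⁻¹ * ∑ k ∈ Finset.range (n + 1), P (T^[k] ⁻¹' A) := by
  simp only [cesaroAverage, Measure.smul_apply, smul_eq_mul, Measure.finsetSum_apply,
    Measure.map_apply (hT.iterate _) hA]

theorem cesaroAverage_apply_le (hT : Measurable T) (n : ℕ) (hA : MeasurableSet A) {c : ℝ≥0∞}
    (h : ∀ k, P (T^[k] ⁻¹' A) ≤ c) : cesaroAverage T P n A ≤ c := by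
  rw [cesaroAverage_apply hT n hA]
  calc ((n + 1 : ℕ) : ℝ≥0∞)⁻¹ * ∑ k ∈ Finset.range (n + 1), P (T^[k] ⁻¹' A)
      ≤ ((n + 1 : ℕ) : ℝ≥0∞)⁻¹ * ∑ k ∈ Finset.range (n + 1), c := by gcongr; exact h _
    _ = c := by
      rw [Finset.sum_const, Finset.card_range, nsmul_eq_mul,
        ENNReal.inv_mul_cancel_left (by positivity) (ENNReal.natCast_ne_top _)]

theorem cesaroAverage_apply_eq (hT : Measurable T) (n : ℕ) (hA : MeasurableSet A) {c : ℝ≥0∞}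
    (h : ∀ k, P (T^[k] ⁻¹' A) = c) : cesaroAverage T P n A = c := by
  rw [cesaroAverage_apply hT n hA]
  simp only [h, Finset.sum_const, Finset.card_range, nsmul_eq_mul]
  exact ENNReal.inv_mul_cancel_left (by positivity) (ENNReal.natCast_ne_top _)

theorem isProbabilityMeasure_cesaroAverage [IsProbabilityMeasure P] (hT : Measurable T)
    (n : ℕ) : IsProbabilityMeasure (cesaroAverage T P n) :=
  ⟨cesaroAverage_apply_eq hT n .univ fun _ => measure_univ⟩

theorem cesaroAverage_apply_preimage_add (hT : Measurable T) (n : ℕ) (hA : MeasurableSet A) :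
    cesaroAverage T P n (T ⁻¹' A) + ((n + 1 : ℕ) : ℝ≥0∞)⁻¹ * P A =
      cesaroAverage T P n A + ((n + 1 : ℕ) : ℝ≥0∞)⁻¹ * P (T^[n + 1] ⁻¹' A) := by
  rw [cesaroAverage_apply hT n (hT hA), cesaroAverage_apply hT n hA, ← mul_add, ← mul_add]
  simp only [← preimage_comp, ← iterate_succ']
  exact congrArg _ ((Finset.sum_range_succ' (fun k => P (T^[k] ⁻¹' A)) (n + 1)).symm.trans
    (Finset.sum_range_succ _ _))

theorem tendsto_inv_succ_mul_measure [IsFiniteMeasure P] (s : ℕ → Set Ω) :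
    Tendsto (fun n => ((n + 1 : ℕ) : ℝ≥0∞)⁻¹ * P (s n)) atTop (𝓝 0) := by
  have hinv : Tendsto (fun n : ℕ => ((n + 1 : ℕ) : ℝ≥0∞)⁻¹) atTop (𝓝 0) :=
    ENNReal.tendsto_inv_nat_nhds_zero.comp (tendsto_add_atTop_nat 1)
  refine tendsto_of_tendsto_of_tendsto_of_le_of_le tendsto_const_nhds
    (by simpa using ENNReal.Tendsto.mul_const hinv (.inr (measure_ne_top P univ)))
    (fun _ => zero_le) fun n =>
      mul_le_mul_of_nonneg_left (measure_mono (subset_univ _)) zero_le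

theorem eq_of_tendsto_cesaroAverage [IsFiniteMeasure P] (hT : Measurable T)
    (hA : MeasurableSet A) {l : Filter ℕ} [l.NeBot] (hl : l ≤ atTop) {a b : ℝ≥0∞}
    (ha : Tendsto (fun n => cesaroAverage T P n A) l (𝓝 a))
    (hb : Tendsto (fun n => cesaroAverage T P n (T ⁻¹' A)) l (𝓝 b)) : b = a := by
  have hb' := hb.add ((tendsto_inv_succ_mul_measure (P := P) fun _ => A).mono_left hl)
  have ha' := ha.add ((tendsto_inv_succ_mul_measure (P := P) fun n => T^[n + 1] ⁻¹' A).mono_left hl)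
  simp only [cesaroAverage_apply_preimage_add hT _ hA, add_zero] at hb' ha'
  exact tendsto_nhds_unique hb' ha'

end Cesaro

end MeasureTheory

theorem stmt_1_general {Ω : Type*} [MeasurableSpace Ω] (T : Ω → Ω) (hT : Measurable T)
    (Θ : Set (Measure Ω))
    (hprob : ∀ P ∈ Θ, IsProbabilityMeasure P)
    (V : Set Ω → ℝ≥0∞)
    (hV : ∀ A : Set Ω, V A = ⨆ P ∈ Θ, P A)
    (hmax : ∀ P : Measure Ω, IsProbabilityMeasure P →
      (∀ A, MeasurableSet A → P A ≤ V A) → P ∈ Θ)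
    (hcont : ∀ A : ℕ → Set Ω, (∀ n, MeasurableSet (A n)) → Antitone A →
      (⋂ n, A n) = ∅ → Tendsto (fun n => V (A n)) atTop (nhds 0))
    (hVinv : ∀ A : Set Ω, MeasurableSet A → V (T ⁻¹' A) = V A) :
    ∀ P ∈ Θ, ∃ P' ∈ Θ,
      (∀ A : Set Ω, MeasurableSet A → P' (T ⁻¹' A) = P' A) ∧
      (∀ A : Set Ω, MeasurableSet A → T ⁻¹' A = A → P' A = P A) := by
  intro P hP
  have := hprob P hP
  have hPV (A : Set Ω) : P A ≤ V A := hV A ▸ le_iSup₂ (f := fun Q (_ : Q ∈ Θ) => Q A) P hP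
  have hQV (n : ℕ) (A : Set Ω) (hA : MeasurableSet A) : cesaroAverage T P n A ≤ V A :=
    cesaroAverage_apply_le hT n hA fun k => apply_preimage_iterate hT hVinv k hA ▸ hPV _
  obtain ⟨P', hP', hlim⟩ := exists_isProbabilityMeasure_tendsto (Ultrafilter.of atTop)
    (isProbabilityMeasure_cesaroAverage hT) hQV hcont
  refine ⟨P', hmax P' hP' fun A hA => le_of_tendsto (hlim A hA) (.of_forall (hQV · A hA)),
    fun A hA => eq_of_tendsto_cesaroAverage hT hA (Ultrafilter.of_le _) (hlim A hA)
      (hlim _ (hT hA)), fun A hA hAinv => tendsto_nhds_unique (hlim A hA) ?_⟩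
  simp only [cesaroAverage_apply_eq hT _ hA fun k => congrArg P
    ((show IsFixedPt (preimage T) A from hAinv).preimage_iterate k), tendsto_const_nhds]

/-- If `V` is continuous and `T`-invariant, then every `P ∈ Θ`
agrees on the invariant σ-algebra with some `T`-invariant `P' ∈ Θ₀ ⊆ Θ`. -/
theorem stmt_1 {Ω : Type*} [MeasurableSpace Ω] (T : Ω → Ω) (hT : Measurable T)
    (Θ : Set (Measure Ω)) (hΘne : Θ.Nonempty)
    (hprob : ∀ P ∈ Θ, IsProbabilityMeasure P)
    (V : Set Ω → ℝ≥0∞)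
    (hV : ∀ A : Set Ω, V A = ⨆ P ∈ Θ, P A)
    (hmax : ∀ P : Measure Ω, IsProbabilityMeasure P →
      (∀ A, MeasurableSet A → P A ≤ V A) → P ∈ Θ)
    (hcont : ∀ A : ℕ → Set Ω, (∀ n, MeasurableSet (A n)) → Antitone A →
      (⋂ n, A n) = ∅ → Tendsto (fun n => V (A n)) atTop (nhds 0))
    (hVinv : ∀ A : Set Ω, MeasurableSet A → V (T ⁻¹' A) = V A) :
    ∀ P ∈ Θ, ∃ P' ∈ Θ,
      (∀ A : Set Ω, MeasurableSet A → P' (T ⁻¹' A) = P' A) ∧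
      (∀ A : Set Ω, MeasurableSet A → T ⁻¹' A = A → P' A = P A) :=
  stmt_1_general T hT Θ hprob V hV hmax hcont hVinv
end

section
/- Assume 𝕍 is continuous, T-invariant, and T-ergodic. Then the set Θ* of T-ergodic probability measures belonging to Θ is finite. -/
/-!
Distinct ergodic measures are mutually singular: the singular part of `μ` with respect to `ν`
is invariant and dominated by `μ`, hence a multiple `c • μ` of it by ergodicity of `μ`; for
`c = 0` we get `μ ≪ ν` and thus `μ = ν` by ergodicity of `ν`. Infinitely many ergodic measures
`P n ∈ Θ` therefore live on pairwise disjoint measurable sets `C n`. The tails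
`⋃ n ≥ N, C n` decrease to `∅`, yet `V` of the `N`-th tail is at least `P N (C N) = 1`,
contradicting the continuity of `V`.
-/

open MeasureTheory Filter Set Function
open scoped ENNReal

theorem Set.iInter_biUnion_ge_eq_empty_of_pairwise_disjoint {α : Type*} {C : ℕ → Set α}
    (h : Pairwise (Disjoint on C)) : ⋂ N, ⋃ n ≥ N, C n = ∅ := by
  refine eq_empty_of_forall_notMem fun x hx => ?_
  obtain ⟨m, -, hxm⟩ := mem_iUnion₂.mp (mem_iInter.mp hx 0)
  obtain ⟨n, hn, hxn⟩ := mem_iUnion₂.mp (mem_iInter.mp hx (m + 1))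
  exact disjoint_left.mp (h (by omega : m ≠ n)) hxm hxn

namespace MeasureTheory

variable {α : Type*} [MeasurableSpace α] {f : α → α}

theorem ergodic_of_measure_preimage_eq_of_measure_eq_zero_or_one {μ : Measure α}
    [IsProbabilityMeasure μ] (hf : Measurable f)
    (hinv : ∀ s, MeasurableSet s → μ (f ⁻¹' s) = μ s)
    (herg : ∀ s, MeasurableSet s → f ⁻¹' s = s → μ s = 0 ∨ μ s = 1) :
    Ergodic f μ where
  measurable := hf
  map_eq := Measure.ext fun s hs => by rw [Measure.map_apply hf hs, hinv s hs]
  aeconst_set s hs hfs := by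
    rw [eventuallyConst_set', ae_eq_empty, ae_eq_univ, prob_compl_eq_zero_iff hs]
    exact herg s hs hfs

theorem Ergodic.mutuallySingular_of_ne {μ ν : Measure α} [IsProbabilityMeasure μ]
    [IsProbabilityMeasure ν] (hμ : Ergodic f μ) (hν : Ergodic f ν) (hne : μ ≠ ν) : μ ⟂ₘ ν := by
  obtain ⟨c, hc⟩ := hμ.eq_smul_of_absolutelyContinuous
    (hμ.toMeasurePreserving.singularPart hν.toMeasurePreserving)
    (Measure.absolutelyContinuous_of_le (Measure.singularPart_le μ ν))
  rcases eq_or_ne c 0 with rfl | hc0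
  · have hμν : μ ≪ ν := (Measure.singularPart_eq_zero μ ν).mp (by simpa using hc)
    exact absurd (hν.eq_of_absolutelyContinuous hμ.toMeasurePreserving hμν) hne
  · refine (Measure.mutuallySingular_singularPart μ ν).mono_ac ?_ .rfl
    rw [hc]
    exact Measure.absolutelyContinuous_smul hc0

theorem exists_pairwise_disjoint_of_pairwise_mutuallySingular {μ : ℕ → Measure α}
    (h : Pairwise fun m n => μ m ⟂ₘ μ n) :
    ∃ C : ℕ → Set α, (∀ n, MeasurableSet (C n)) ∧ Pairwise (Disjoint on C) ∧
      ∀ n, μ n (C n)ᶜ = 0 := by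
  have hsum (n : ℕ) : μ n ⟂ₘ Measure.sum fun m : {m // m ≠ n} => μ m :=
    Measure.MutuallySingular.sum_right.mpr fun m => h m.2.symm
  set s : ℕ → Set α := fun n => (hsum n).nullSetᶜ
  have hs_meas (n : ℕ) : MeasurableSet (s n) := (hsum n).measurableSet_nullSet.compl
  have hs_compl (n : ℕ) : μ n (s n)ᶜ = 0 := by
    rw [compl_compl]
    exact (hsum n).measure_nullSet
  have hs_other {m n : ℕ} (hmn : m ≠ n) : μ m (s n) = 0 :=
    Measure.sum_apply_eq_zero.mp (hsum n).measure_compl_nullSet ⟨m, hmn⟩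
  refine ⟨disjointed s, MeasurableSet.disjointed hs_meas, disjoint_disjointed s, fun n => ?_⟩
  rw [disjointed_eq_inter_compl, compl_inter, compl_iInter₂]
  simp only [compl_compl]
  exact measure_union_null (hs_compl n)
    (measure_biUnion_null_iff (to_countable _) |>.mpr fun m hm => hs_other (ne_of_lt hm).symm)

theorem finite_ergodic_of_le_of_continuous (f : α → α) {Θ : Set (Measure α)}
    (V : Set α → ℝ≥0∞) (hle : ∀ P ∈ Θ, ∀ s, P s ≤ V s)
    (hcont : ∀ A : ℕ → Set α, (∀ n, MeasurableSet (A n)) → Antitone A →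
      (⋂ n, A n) = ∅ → Tendsto (fun n => V (A n)) atTop (nhds 0)) :
    {P ∈ Θ | IsProbabilityMeasure P ∧ Ergodic f P}.Finite := by
  by_contra hinf
  set e := Set.Infinite.natEmbedding _ hinf
  have hP (n : ℕ) : (e n : Measure α) ∈ Θ ∧ IsProbabilityMeasure (e n : Measure α) ∧
      Ergodic f (e n) := (e n).2
  obtain ⟨C, hC_meas, hC_disj, hC⟩ :=
    exists_pairwise_disjoint_of_pairwise_mutuallySingular fun m n hmn =>
      have := (hP m).2.1
      have := (hP n).2.1
      (hP m).2.2.mutuallySingular_of_ne (hP n).2.2 fun h => hmn (e.injective (Subtype.ext h))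
  have htail : Tendsto (fun N => V (⋃ n ≥ N, C n)) atTop (nhds 0) :=
    hcont _ (fun N => MeasurableSet.biUnion (to_countable _) fun n _ => hC_meas n)
      (fun M N hMN => iUnion₂_mono' fun n hn => ⟨n, hMN.trans hn, le_rfl⟩)
      (iInter_biUnion_ge_eq_empty_of_pairwise_disjoint hC_disj)
  have hone (N : ℕ) : 1 ≤ V (⋃ n ≥ N, C n) := by
    have := (hP N).2.1
    calc 1 = (e N : Measure α) (C N) := ((prob_compl_eq_zero_iff (hC_meas N)).mp (hC N)).symm
      _ ≤ (e N : Measure α) (⋃ n ≥ N, C n) :=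
        measure_mono (subset_iUnion₂ (s := fun n (_ : n ≥ N) => C n) N le_rfl)
      _ ≤ V (⋃ n ≥ N, C n) := hle _ (hP N).1 _
  exact absurd (ge_of_tendsto' htail hone) (by simp)

end MeasureTheory

theorem stmt_4_general {Ω : Type*} [MeasurableSpace Ω] (T : Ω → Ω) (hT : Measurable T)
    (Θ : Set (Measure Ω))
    (hprob : ∀ P ∈ Θ, IsProbabilityMeasure P)
    (V : Set Ω → ℝ≥0∞)
    (hV : ∀ A : Set Ω, V A = ⨆ P ∈ Θ, P A)
    (hcont : ∀ A : ℕ → Set Ω, (∀ n, MeasurableSet (A n)) → Antitone A →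
      (⋂ n, A n) = ∅ → Tendsto (fun n => V (A n)) atTop (nhds 0)) :
    {P ∈ Θ | (∀ A : Set Ω, MeasurableSet A → P (T ⁻¹' A) = P A) ∧
      (∀ A : Set Ω, MeasurableSet A → T ⁻¹' A = A → P A = 0 ∨ P A = 1)}.Finite := by
  have hle : ∀ P ∈ Θ, ∀ A, P A ≤ V A := fun P hP A =>
    (hV A).symm ▸ le_iSup₂ (f := fun P _ => P A) P hP
  refine (finite_ergodic_of_le_of_continuous T V hle hcont).subset ?_
  rintro P ⟨hPΘ, hinv, herg⟩
  have := hprob P hPΘ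
  exact ⟨hPΘ, this, ergodic_of_measure_preimage_eq_of_measure_eq_zero_or_one hT hinv herg⟩

/-- If `V` is continuous, `T`-invariant and `T`-ergodic, then the
set `Θ*` of `T`-ergodic probability measures in `Θ` is finite. -/
theorem stmt_4 {Ω : Type*} [MeasurableSpace Ω] (T : Ω → Ω) (hT : Measurable T)
    (Θ : Set (Measure Ω)) (hΘne : Θ.Nonempty)
    (hprob : ∀ P ∈ Θ, IsProbabilityMeasure P)
    (V : Set Ω → ℝ≥0∞)
    (hV : ∀ A : Set Ω, V A = ⨆ P ∈ Θ, P A)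
    (hmax : ∀ P : Measure Ω, IsProbabilityMeasure P →
      (∀ A, MeasurableSet A → P A ≤ V A) → P ∈ Θ)
    (hcont : ∀ A : ℕ → Set Ω, (∀ n, MeasurableSet (A n)) → Antitone A →
      (⋂ n, A n) = ∅ → Tendsto (fun n => V (A n)) atTop (nhds 0))
    (hVinv : ∀ A : Set Ω, MeasurableSet A → V (T ⁻¹' A) = V A)
    (hVerg : ∀ A : Set Ω, MeasurableSet A → T ⁻¹' A = A → V A = 0 ∨ V A = 1) :
    {P ∈ Θ | (∀ A : Set Ω, MeasurableSet A → P (T ⁻¹' A) = P A) ∧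
      (∀ A : Set Ω, MeasurableSet A → T ⁻¹' A = A → P A = 0 ∨ P A = 1)}.Finite :=
  stmt_4_general T hT Θ hprob V hV hcont
end

section
/- Assume 𝕍 is continuous, T-invariant, and T-ergodic. Then Θ₀ equals the convex hull of Θ*: every T-invariant probability measure P ∈ Θ₀ can be written as a finite convex combination P = Σ_{k=1}^n λ_k P_k with P_k ∈ Θ*, λ_k ≥ 0, Σ λ_k = 1, and conversely every such finite convex combination of elements of Θ* belongs to Θ₀. -/
open MeasureTheory Filter Function MeasurableSpace ProbabilityTheory
open scoped ENNReal

/-!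
For `P ∈ Θ₀`, the invariant σ-algebra carries only finitely many `P`-atoms up to a null set:
an infinite disjoint family of invariant sets of positive `P`-measure would have tails `Bₙ ↓ ∅`
with `𝕍(Bₙ) = 1` by ergodicity, contradicting the continuity of `𝕍`. So `P` is the convex
combination of its conditionings `P[·|C]` on these atoms, each of which is invariant and ergodic.

What remains is `P[·|C] ≤ 𝕍` for invariant `C`, which puts `P[·|C]` in `Θ` by maximality.
By the mean ergodic theorem in `L²(P)` a subsequence of the visit frequencies of `A` converges
`P`-a.e.; their `liminf` `L` is invariant everywhere (not only `P`-a.e.) and `∫_C L dP = P(A ∩ C)`.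
If `c · P(C) < P(A ∩ C)`, the invariant set `E = {L > c}` is not `P`-null, so `𝕍(E) = 1`; for each
`Q ∈ Θ`, Fatou's lemma gives `c · Q(E) ≤ ∫_E L dQ ≤ 𝕍(A)`, since a visit frequency integrates under
`Q` to an average of the `Q(T⁻ᵏA) ≤ 𝕍(T⁻ᵏA) = 𝕍(A)`. The supremum over `Q` yields `c ≤ 𝕍(A)`.
-/

namespace MeasureTheory.Lp

variable {Ω E : Type*} [MeasurableSpace Ω] [NormedAddCommGroup E] {p : ℝ≥0∞} {μ : Measure Ω}
  {T : Ω → Ω}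

theorem coeFn_birkhoffSum_compMeasurePreserving (hT : MeasurePreserving T μ μ) (g : Lp E p μ)
    (n : ℕ) : ⇑(birkhoffSum (compMeasurePreserving T hT) id n g) =ᵐ[μ] birkhoffSum T g n := by
  induction n with
  | zero => simpa using coeFn_zero E p μ
  | succ n ih =>
    have hiter : ⇑((compMeasurePreserving T hT)^[n] g) =ᵐ[μ] g ∘ T^[n] := by
      rw [compMeasurePreserving_iterate]
      exact coeFn_compMeasurePreserving g (hT.iterate n)
    filter_upwards [coeFn_add (birkhoffSum (compMeasurePreserving T hT) id n g)
      ((compMeasurePreserving T hT)^[n] g), ih, hiter] with x hadd hsum hx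
    simp only [birkhoffSum_succ, id, hadd, Pi.add_apply, hsum, hx, Function.comp_apply]

theorem coeFn_birkhoffAverage_compMeasurePreserving (hT : MeasurePreserving T μ μ)
    (g : Lp ℝ p μ) (n : ℕ) :
    ⇑(birkhoffAverage ℝ (compMeasurePreserving T hT) id n g) =ᵐ[μ] birkhoffAverage ℝ T g n := by
  filter_upwards [coeFn_smul (n : ℝ)⁻¹ (birkhoffSum (compMeasurePreserving T hT) id n g),
    coeFn_birkhoffSum_compMeasurePreserving hT g n] with x hsmul hsum
  simp only [birkhoffAverage, hsmul, Pi.smul_apply, hsum]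

end MeasureTheory.Lp

namespace MeasureTheory.MeasurePreserving

variable {Ω : Type*} [MeasurableSpace Ω] {μ : Measure Ω} {T : Ω → Ω}

theorem exists_subseq_ae_tendsto_birkhoffAverage (hT : MeasurePreserving T μ μ) {f : Ω → ℝ}
    (hf : MemLp f 2 μ) : ∃ ns : ℕ → ℕ, StrictMono ns ∧
      ∀ᵐ x ∂μ, ∃ l, Tendsto (fun i => birkhoffAverage ℝ T f (ns i) x) atTop (nhds l) := by
  have : Fact ((1 : ℝ≥0∞) ≤ 2) := ⟨one_le_two⟩
  let U := (Lp.compMeasurePreservingₗᵢ ℝ T hT : Lp ℝ 2 μ →ₗᵢ[ℝ] Lp ℝ 2 μ).toContinuousLinearMap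
  have hU := U.tendsto_birkhoffAverage_orthogonalProjection
    (LinearIsometry.norm_toContinuousLinearMap_le _) (hf.toLp f)
  obtain ⟨ns, hns, hae⟩ := (tendstoInMeasure_of_tendsto_Lp hU).exists_seq_tendsto_ae
  refine ⟨ns, hns, ?_⟩
  have hcoe : ∀ n, ⇑(birkhoffAverage ℝ U id n (hf.toLp f)) =ᵐ[μ] birkhoffAverage ℝ T f n :=
    fun n => (Lp.coeFn_birkhoffAverage_compMeasurePreserving hT _ n).trans
      (Measure.QuasiMeasurePreserving.birkhoffAverage_ae_eq_of_ae_eq ℝ hT.quasiMeasurePreserving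
        hf.coeFn_toLp n)
  filter_upwards [hae, ae_all_iff.mpr hcoe] with x hx hcx
  exact ⟨_, by simpa only [hcx] using hx⟩

end MeasureTheory.MeasurePreserving

section BirkhoffSum

variable {α M : Type*} [AddCommMonoid M] [PartialOrder M] [IsOrderedAddMonoid M]
  {f : α → α} {g : α → M} {b : M}

theorem birkhoffSum_le_nsmul (hg : ∀ x, g x ≤ b) (n : ℕ) (x : α) :
    birkhoffSum f g n x ≤ n • b := by
  simpa [birkhoffSum] using Finset.sum_le_card_nsmul (Finset.range n) _ b fun k _ => hg (f^[k] x)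

variable [CanonicallyOrderedAdd M]

theorem birkhoffSum_apply_le_add (hg : ∀ x, g x ≤ b) (n : ℕ) (x : α) :
    birkhoffSum f g n (f x) ≤ birkhoffSum f g n x + b :=
  calc birkhoffSum f g n (f x) ≤ birkhoffSum f g n (f x) + g x := le_self_add
    _ = birkhoffSum f g n x + g (f^[n] x) := by
      rw [add_comm, ← birkhoffSum_succ', birkhoffSum_succ]
    _ ≤ birkhoffSum f g n x + b := by grw [hg]

theorem birkhoffSum_le_apply_add (hg : ∀ x, g x ≤ b) (n : ℕ) (x : α) :
    birkhoffSum f g n x ≤ birkhoffSum f g n (f x) + b :=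
  calc birkhoffSum f g n x ≤ birkhoffSum f g n x + g (f^[n] x) := le_self_add
    _ = birkhoffSum f g n (f x) + g x := by rw [← birkhoffSum_succ, birkhoffSum_succ', add_comm]
    _ ≤ birkhoffSum f g n (f x) + b := by grw [hg]

end BirkhoffSum

theorem ENNReal.liminf_le_liminf_of_le_add {u v e : ℕ → ℝ≥0∞} (huv : ∀ i, u i ≤ v i + e i)
    (he : Tendsto e atTop (nhds 0)) : liminf u atTop ≤ liminf v atTop := by
  refine ENNReal.le_of_forall_pos_le_add fun ε hε _ => ?_
  have hev : ∀ᶠ i in atTop, u i ≤ v i + ε := by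
    filter_upwards [ENNReal.tendsto_nhds_zero.mp he ε (by exact_mod_cast hε)] with i hi
    grw [huv i, hi]
  calc liminf u atTop ≤ liminf (fun i => v i + ε) atTop := liminf_le_liminf hev
    _ = liminf v atTop + ε :=
      liminf_add_const _ _ _ isCobounded_ge_of_top (isBoundedUnder_of ⟨0, fun _ => zero_le⟩)

theorem Set.indicator_one_le_one {α : Type*} {s : Set α} (x : α) :
    s.indicator (1 : α → ℝ≥0∞) x ≤ 1 :=
  Set.indicator_le_self' (fun _ _ => zero_le) x

section VisitFrequency

variable {Ω : Type*} {T : Ω → Ω} {A : Set Ω}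

noncomputable def visitFrequency (T : Ω → Ω) (A : Set Ω) (n : ℕ) (x : Ω) : ℝ≥0∞ :=
  (n : ℝ≥0∞)⁻¹ * birkhoffSum T (A.indicator 1) n x

theorem visitFrequency_le_one (n : ℕ) (x : Ω) : visitFrequency T A n x ≤ 1 := by
  calc visitFrequency T A n x ≤ (n : ℝ≥0∞)⁻¹ * n := by
        grw [visitFrequency, birkhoffSum_le_nsmul Set.indicator_one_le_one, nsmul_one]
    _ ≤ 1 := ENNReal.inv_mul_le_one _

theorem visitFrequency_apply_le_add (n : ℕ) (x : Ω) :
    visitFrequency T A n (T x) ≤ visitFrequency T A n x + (n : ℝ≥0∞)⁻¹ := by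
  grw [visitFrequency, birkhoffSum_apply_le_add Set.indicator_one_le_one, mul_add, mul_one,
    visitFrequency]

theorem visitFrequency_le_apply_add (n : ℕ) (x : Ω) :
    visitFrequency T A n x ≤ visitFrequency T A n (T x) + (n : ℝ≥0∞)⁻¹ := by
  grw [visitFrequency, birkhoffSum_le_apply_add Set.indicator_one_le_one, mul_add, mul_one,
    visitFrequency]

theorem liminf_visitFrequency_apply {ns : ℕ → ℕ} (hns : Tendsto ns atTop atTop) (x : Ω) :
    liminf (fun i => visitFrequency T A (ns i) (T x)) atTop =
      liminf (fun i => visitFrequency T A (ns i) x) atTop := by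
  have he := ENNReal.tendsto_inv_nat_nhds_zero.comp hns
  exact le_antisymm
    (ENNReal.liminf_le_liminf_of_le_add (fun i => visitFrequency_apply_le_add _ x) he)
    (ENNReal.liminf_le_liminf_of_le_add (fun i => visitFrequency_le_apply_add _ x) he)

theorem ofReal_birkhoffAverage_indicator (n : ℕ) (x : Ω) :
    ENNReal.ofReal (birkhoffAverage ℝ T (A.indicator 1) n x) = visitFrequency T A n x := by
  have hind : ∀ y, ENNReal.ofReal (A.indicator 1 y) = A.indicator 1 y := by
    intro y; by_cases hy : y ∈ A <;> simp [hy]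
  rcases n.eq_zero_or_pos with rfl | hn
  · simp [visitFrequency]
  rw [birkhoffAverage, smul_eq_mul, ENNReal.ofReal_mul (by positivity),
    ENNReal.ofReal_inv_of_pos (by positivity), ENNReal.ofReal_natCast, birkhoffSum,
    ENNReal.ofReal_sum_of_nonneg (f := fun k => A.indicator 1 (T^[k] x))
      fun k _ => Set.indicator_nonneg (fun _ _ => zero_le_one) _]
  simp only [hind, visitFrequency, birkhoffSum]

variable [MeasurableSpace Ω] (hT : Measurable T) (hA : MeasurableSet A)
include hT hA

theorem measurable_indicator_one_iterate (k : ℕ) :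
    Measurable fun x => A.indicator (1 : Ω → ℝ≥0∞) (T^[k] x) :=
  (measurable_one.indicator hA).comp (hT.iterate k)

theorem measurable_visitFrequency (n : ℕ) : Measurable (visitFrequency T A n) :=
  (Finset.measurable_sum _ fun k _ => measurable_indicator_one_iterate hT hA k).const_mul _

theorem lintegral_visitFrequency (μ : Measure Ω) (n : ℕ) :
    ∫⁻ x, visitFrequency T A n x ∂μ = (n : ℝ≥0∞)⁻¹ * ∑ k ∈ Finset.range n, μ (T^[k] ⁻¹' A) := by
  have hk : ∀ k, ∫⁻ x, A.indicator 1 (T^[k] x) ∂μ = μ (T^[k] ⁻¹' A) := fun k => by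
    simp_rw [← Set.indicator_comp_right]
    exact lintegral_indicator_one (hA.preimage (hT.iterate k))
  simp_rw [visitFrequency, birkhoffSum]
  rw [lintegral_const_mul _ (Finset.measurable_sum _ fun k _ =>
    measurable_indicator_one_iterate hT hA k),
    lintegral_finsetSum _ fun k _ => measurable_indicator_one_iterate hT hA k]
  simp only [hk]

theorem lintegral_visitFrequency_le {μ : Measure Ω} {b : ℝ≥0∞} (h : ∀ k, μ (T^[k] ⁻¹' A) ≤ b)
    (n : ℕ) : ∫⁻ x, visitFrequency T A n x ∂μ ≤ b := by
  rw [lintegral_visitFrequency hT hA]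
  grw [Finset.sum_le_card_nsmul _ _ b fun k _ => h k, Finset.card_range, nsmul_eq_mul]
  rcases eq_or_ne n 0 with rfl | hn
  · simp
  · rw [ENNReal.inv_mul_cancel_left (by exact_mod_cast hn) (ENNReal.natCast_ne_top n)]

end VisitFrequency

section Invariant

variable {Ω : Type*} [MeasurableSpace Ω] {T : Ω → Ω} {A C : Set Ω} {μ : Measure Ω}

theorem preimage_iterate_eq_of_measurableSet_invariants (hC : MeasurableSet[invariants T] C)
    (k : ℕ) : T^[k] ⁻¹' C = C :=
  (le_invariants_iterate T k C hC).2

theorem setLIntegral_visitFrequency (hT : MeasurePreserving T μ μ) (hA : MeasurableSet A)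
    (hC : MeasurableSet[invariants T] C) {n : ℕ} (hn : n ≠ 0) :
    ∫⁻ x in C, visitFrequency T A n x ∂μ = μ (A ∩ C) := by
  have hk : ∀ k, μ.restrict C (T^[k] ⁻¹' A) = μ (A ∩ C) := fun k => by
    rw [Measure.restrict_apply (hA.preimage (hT.measurable.iterate k)),
      ← (hT.iterate k).measure_preimage (hA.inter hC.1).nullMeasurableSet, Set.preimage_inter,
      preimage_iterate_eq_of_measurableSet_invariants hC k]
  rw [lintegral_visitFrequency hT.measurable hA, Finset.sum_congr rfl fun k _ => hk k,
    Finset.sum_const, Finset.card_range, nsmul_eq_mul,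
    ENNReal.inv_mul_cancel_left (by exact_mod_cast hn) (ENNReal.natCast_ne_top n)]

theorem exists_subseq_setLIntegral_liminf_visitFrequency [IsFiniteMeasure μ]
    (hT : MeasurePreserving T μ μ) (hA : MeasurableSet A) :
    ∃ ns : ℕ → ℕ, StrictMono ns ∧ ∀ C, MeasurableSet[invariants T] C →
      ∫⁻ x in C, liminf (fun i => visitFrequency T A (ns i) x) atTop ∂μ = μ (A ∩ C) := by
  have hL2 : MemLp (A.indicator (1 : Ω → ℝ)) 2 μ :=
    memLp_indicator_const 2 hA 1 (Or.inr (measure_ne_top μ A))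
  obtain ⟨ns, hns, hconv⟩ := hT.exists_subseq_ae_tendsto_birkhoffAverage hL2
  refine ⟨ns, hns, fun C hC => ?_⟩
  have hlim : ∀ᵐ x ∂μ, Tendsto (fun i => visitFrequency T A (ns i) x) atTop
      (nhds (liminf (fun i => visitFrequency T A (ns i) x) atTop)) := by
    filter_upwards [hconv] with x ⟨l, hl⟩
    have h := (ENNReal.continuous_ofReal.tendsto l).comp hl
    simp only [Function.comp_def, ofReal_birkhoffAverage_indicator] at h
    rwa [h.liminf_eq]
  have hint := tendsto_lintegral_of_dominated_convergence (μ := μ.restrict C) 1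
    (fun i => measurable_visitFrequency hT.measurable hA (ns i))
    (fun i => ae_of_all _ fun x => visitFrequency_le_one (ns i) x)
    (by simp [measure_ne_top]) (ae_restrict_of_ae hlim)
  refine tendsto_nhds_unique hint (tendsto_const_nhds.congr' ?_)
  filter_upwards [eventually_ge_atTop 1] with i hi
  exact (setLIntegral_visitFrequency hT hA hC (hns.le_apply.trans_lt' hi).ne').symm

end Invariant

noncomputable def upperProb {Ω : Type*} [MeasurableSpace Ω] (Θ : Set (Measure Ω))
    (A : Set Ω) : ℝ≥0∞ :=
  ⨆ P ∈ Θ, P A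

section UpperProb

variable {Ω : Type*} [MeasurableSpace Ω] {Θ : Set (Measure Ω)} {T : Ω → Ω} {P : Measure Ω}
  {A C : Set Ω}

theorem le_upperProb (hP : P ∈ Θ) (A : Set Ω) : P A ≤ upperProb Θ A :=
  le_biSup (fun P : Measure Ω => P A) hP

theorem upperProb_preimage_iterate (hT : Measurable T)
    (hinv : ∀ A, MeasurableSet A → upperProb Θ (T ⁻¹' A) = upperProb Θ A)
    (hA : MeasurableSet A) (k : ℕ) : upperProb Θ (T^[k] ⁻¹' A) = upperProb Θ A := by
  induction k with
  | zero => rfl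
  | succ k ih =>
    rw [Function.iterate_succ, Set.preimage_comp, hinv _ (hA.preimage (hT.iterate k)), ih]

variable (hT : Measurable T)
  (hinv : ∀ A, MeasurableSet A → upperProb Θ (T ⁻¹' A) = upperProb Θ A)
  (herg : ∀ E, MeasurableSet[invariants T] E → upperProb Θ E = 0 ∨ upperProb Θ E = 1)
  (hPΘ : P ∈ Θ) [IsFiniteMeasure P] (hP : MeasurePreserving T P P)
include hT hinv herg hPΘ hP

theorem le_upperProb_of_mul_lt (hA : MeasurableSet A) (hC : MeasurableSet[invariants T] C)
    {c : ℝ≥0∞} (hc : c * P C < P (A ∩ C)) : c ≤ upperProb Θ A := by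
  obtain ⟨ns, hns, hint⟩ := exists_subseq_setLIntegral_liminf_visitFrequency hP hA
  set L : Ω → ℝ≥0∞ := fun x => liminf (fun i => visitFrequency T A (ns i) x) atTop
  have hLm : Measurable L := .liminf fun i => measurable_visitFrequency hT hA (ns i)
  set E := {x | c < L x}
  have hE : MeasurableSet[invariants T] E := ⟨measurableSet_lt measurable_const hLm, by
    ext x; simp only [E, L, Set.mem_preimage, Set.mem_ofPred_eq,
      liminf_visitFrequency_apply hns.tendsto_atTop]⟩
  -- If `L ≤ c` held `P`-a.e., its integral over `C` would be at most `c * P C`.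
  have hPE : P E ≠ 0 := fun hE0 => by
    have hLc : ∫⁻ x in C, L x ∂P ≤ ∫⁻ _ in C, c ∂P :=
      setLIntegral_mono_ae measurable_const.aemeasurable <| by
        filter_upwards [measure_eq_zero_iff_ae_notMem.mp hE0] with x hx _
        exact not_lt.mp hx
    rw [hint C hC, setLIntegral_const] at hLc
    exact hc.not_ge hLc
  have hVE : upperProb Θ E = 1 :=
    (herg E hE).resolve_left (ne_bot_of_le_ne_bot hPE (le_upperProb hPΘ E))
  have hbound : ∀ Q ∈ Θ, c * Q E ≤ upperProb Θ A := fun Q hQ =>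
    calc c * Q E = ∫⁻ _ in E, c ∂Q := (setLIntegral_const E c).symm
      _ ≤ ∫⁻ x in E, L x ∂Q := setLIntegral_mono hLm fun x hx => hx.le
      _ ≤ liminf (fun i => ∫⁻ x in E, visitFrequency T A (ns i) x ∂Q) atTop :=
        lintegral_liminf_le fun i => measurable_visitFrequency hT hA (ns i)
      _ ≤ upperProb Θ A := liminf_le_of_frequently_le' <| .of_forall fun i =>
        lintegral_visitFrequency_le hT hA (fun k =>
          (Measure.restrict_le_self _).trans <| (le_upperProb hQ _).trans_eq
            (upperProb_preimage_iterate hT hinv hA k)) _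
  calc c = c * upperProb Θ E := by rw [hVE, mul_one]
    _ = ⨆ Q ∈ Θ, c * Q E := by simp only [upperProb, ENNReal.mul_iSup]
    _ ≤ upperProb Θ A := iSup₂_le hbound

theorem cond_apply_le_upperProb (hA : MeasurableSet A) (hC : MeasurableSet[invariants T] C) :
    P[A | C] ≤ upperProb Θ A := by
  refine le_of_forall_lt_imp_le_of_dense fun c hc => ?_
  rw [cond_apply hC.1, Set.inter_comm] at hc
  have hC0 : P C ≠ 0 := fun h0 => by
    simp [measure_mono_null Set.inter_subset_right h0] at hc
  rw [← ENNReal.div_eq_inv_mul, ENNReal.lt_div_iff_mul_lt (.inl hC0) (.inl (measure_ne_top P C))]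
    at hc
  exact le_upperProb_of_mul_lt hT hinv herg hPΘ hP hA hC hc

end UpperProb

section Carving

variable {α : Type*} (piece : Set α → Set α) (s : Set α)

def carveRemainder (n : ℕ) : Set α :=
  (fun t => t \ piece t)^[n] s

theorem carveRemainder_succ (n : ℕ) :
    carveRemainder piece s (n + 1) =
      carveRemainder piece s n \ piece (carveRemainder piece s n) :=
  Function.iterate_succ_apply' _ _ _

theorem carveRemainder_induction {p : Set α → Prop} (h0 : p s)
    (hstep : ∀ t, p t → p (t \ piece t)) (n : ℕ) : p (carveRemainder piece s n) :=
  Function.Iterate.rec p h0 hstep n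

theorem antitone_carveRemainder : Antitone (carveRemainder piece s) :=
  antitone_nat_of_succ_le fun n => by rw [carveRemainder_succ]; exact Set.sdiff_subset

theorem pairwise_disjoint_piece_carveRemainder (hpiece : ∀ t, piece t ⊆ t) :
    Pairwise (Disjoint on fun n => piece (carveRemainder piece s n)) := by
  refine (pairwise_disjoint_on _).mpr fun i j hij => ?_
  have hj : piece (carveRemainder piece s j) ⊆ carveRemainder piece s (i + 1) :=
    (hpiece _).trans (antitone_carveRemainder piece s hij)
  rw [carveRemainder_succ] at hj
  exact Set.disjoint_of_subset_right hj Set.disjoint_sdiff_right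

theorem mem_carveRemainder {x : α} (hx : x ∈ s) {n : ℕ}
    (hxn : ∀ k < n, x ∉ piece (carveRemainder piece s k)) : x ∈ carveRemainder piece s n := by
  induction n with
  | zero => exact hx
  | succ n ih =>
    rw [carveRemainder_succ]
    exact ⟨ih fun k hk => hxn k (k.lt_succ_of_lt hk), hxn n n.lt_succ_self⟩

end Carving

section Atoms

variable {Ω : Type*}

def IsAtomOn {m₀ : MeasurableSpace Ω} (m : MeasurableSpace Ω) (μ : Measure[m₀] Ω) (s : Set Ω) :
    Prop :=
  MeasurableSet[m] s ∧ μ s ≠ 0 ∧ ∀ t, MeasurableSet[m] t → t ⊆ s → μ t = 0 ∨ μ t = μ s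

variable {m₀ m : MeasurableSpace Ω} {μ : Measure[m₀] Ω} (hm : m ≤ m₀)
  (hfin : ∀ D : ℕ → Set Ω, (∀ i, MeasurableSet[m] (D i)) → Pairwise (Disjoint on D) →
    ∃ i, μ (D i) = 0)
include hm hfin

theorem exists_isAtomOn_subset {s : Set Ω} (hs : MeasurableSet[m] s) (hs0 : μ s ≠ 0) :
    ∃ t ⊆ s, IsAtomOn m μ t := by
  by_contra! hno
  have hsplit : ∀ t, ∃ u ⊆ t, MeasurableSet[m] t ∧ μ t ≠ 0 ∧ t ⊆ s →
      MeasurableSet[m] u ∧ μ u ≠ 0 ∧ μ (t \ u) ≠ 0 := fun t => by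
    by_cases ht : MeasurableSet[m] t ∧ μ t ≠ 0 ∧ t ⊆ s
    · have h := hno t ht.2.2
      simp only [IsAtomOn, not_and, not_forall, not_or] at h
      obtain ⟨u, hu, hut, hu0, hne⟩ := h ht.1 ht.2.1
      refine ⟨u, hut, fun _ => ⟨hu, hu0, fun hdiff => hne ?_⟩⟩
      rw [← measure_inter_add_sdiff t (hm u hu), Set.inter_eq_right.mpr hut, hdiff, add_zero]
    · exact ⟨∅, Set.empty_subset t, fun h => absurd h ht⟩
  choose piece hsub hpiece using hsplit
  have hrem : ∀ n, MeasurableSet[m] (carveRemainder piece s n) ∧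
      μ (carveRemainder piece s n) ≠ 0 ∧ carveRemainder piece s n ⊆ s :=
    carveRemainder_induction piece s (p := fun t => MeasurableSet[m] t ∧ μ t ≠ 0 ∧ t ⊆ s)
      ⟨hs, hs0, subset_rfl⟩ fun t ht =>
      ⟨ht.1.diff (hpiece t ht).1, (hpiece t ht).2.2, Set.sdiff_subset.trans ht.2.2⟩
  obtain ⟨i, hi⟩ := hfin _ (fun n => (hpiece _ (hrem n)).1)
    (pairwise_disjoint_piece_carveRemainder piece s hsub)
  exact (hpiece _ (hrem i)).2.1 hi

theorem exists_finite_isAtomOn :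
    ∃ (n : ℕ) (C : Fin n → Set Ω), (∀ k, IsAtomOn m μ (C k)) ∧ Pairwise (Disjoint on C) ∧
      μ (⋃ k, C k)ᶜ = 0 := by
  have hpick : ∀ t, ∃ u ⊆ t, MeasurableSet[m] t →
      MeasurableSet[m] u ∧ (μ t ≠ 0 → IsAtomOn m μ u) := fun t => by
    by_cases ht : MeasurableSet[m] t ∧ μ t ≠ 0
    · obtain ⟨u, hut, hu⟩ := exists_isAtomOn_subset hm hfin ht.1 ht.2
      exact ⟨u, hut, fun _ => ⟨hu.1, fun _ => hu⟩⟩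
    · exact ⟨∅, Set.empty_subset t, fun ht' => ⟨.empty, fun h0 => absurd ⟨ht', h0⟩ ht⟩⟩
  choose piece hsub hpiece using hpick
  set rem := carveRemainder piece Set.univ
  have hrem : ∀ n, MeasurableSet[m] (rem n) :=
    carveRemainder_induction piece _ (p := MeasurableSet[m]) .univ fun t ht =>
      ht.diff (hpiece t ht).1
  have hdisj := pairwise_disjoint_piece_carveRemainder piece Set.univ hsub
  have hstop : ∃ n, μ (rem n) = 0 := by
    by_contra! hpos
    obtain ⟨i, hi⟩ := hfin _ (fun n => (hpiece _ (hrem n)).1) hdisj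
    exact ((hpiece _ (hrem i)).2 (hpos i)).2.1 hi
  refine ⟨Nat.find hstop, fun k => piece (rem k),
    fun k => (hpiece _ (hrem k)).2 (Nat.find_min hstop k.2),
    hdisj.comp_of_injective Fin.val_injective, measure_mono_null (fun x hx => ?_)
      (Nat.find_spec hstop)⟩
  simp only [Set.mem_compl_iff, Set.mem_iUnion, not_exists] at hx
  exact mem_carveRemainder piece _ (Set.mem_univ x) fun k hk => hx ⟨k, hk⟩

end Atoms

section Decomposition

variable {Ω : Type*}

theorem exists_measure_eq_zero_of_pairwise_disjoint {m₀ m : MeasurableSpace Ω} (hm : m ≤ m₀)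
    {μ : Measure[m₀] Ω} {V : Set Ω → ℝ≥0∞}
    (hcont : ∀ A : ℕ → Set Ω, (∀ n, MeasurableSet[m₀] (A n)) → Antitone A →
      (⋂ n, A n) = ∅ → Tendsto (fun n => V (A n)) atTop (nhds 0))
    (herg : ∀ E, MeasurableSet[m] E → V E = 0 ∨ V E = 1) (hμV : ∀ A, μ A ≤ V A)
    (D : ℕ → Set Ω) (hD : ∀ i, MeasurableSet[m] (D i)) (hdisj : Pairwise (Disjoint on D)) :
    ∃ i, μ (D i) = 0 := by
  by_contra! hpos
  set B : ℕ → Set Ω := fun n => ⋃ i ≥ n, D i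
  have hBm : ∀ n, MeasurableSet[m] (B n) := fun n => .iUnion fun i => .iUnion fun _ => hD i
  have hBanti : Antitone B := fun a b hab =>
    Set.biUnion_subset_biUnion_left fun i hi => le_trans hab hi
  have hBempty : ⋂ n, B n = ∅ := by
    refine Set.eq_empty_of_forall_notMem fun x hx => ?_
    simp only [B, Set.mem_iInter, Set.mem_iUnion] at hx
    obtain ⟨i, -, hi⟩ := hx 0
    obtain ⟨j, hij, hj⟩ := hx (i + 1)
    exact Set.disjoint_left.mp (hdisj (by omega : i ≠ j)) hi hj
  have hVB : ∀ n, V (B n) = 1 := fun n =>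
    (herg _ (hBm n)).resolve_left <| ne_bot_of_le_ne_bot (hpos n) <|
      (measure_mono (Set.subset_biUnion_of_mem (le_refl n))).trans (hμV _)
  have hlim := hcont B (fun n => hm _ (hBm n)) hBanti hBempty
  simp only [hVB] at hlim
  exact one_ne_zero (tendsto_nhds_unique tendsto_const_nhds hlim)

theorem IsAtomOn.cond_eq_zero_or_one {m₀ m : MeasurableSpace Ω} {μ : Measure[m₀] Ω}
    [IsFiniteMeasure μ] {C E : Set Ω} (hC : IsAtomOn m μ C) (hm : m ≤ m₀)
    (hE : MeasurableSet[m] E) :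
    μ[E | C] = 0 ∨ μ[E | C] = 1 := by
  rw [cond_apply (hm _ hC.1)]
  rcases hC.2.2 (C ∩ E) (hC.1.inter hE) Set.inter_subset_left with h | h
  · simp [h]
  · rw [h, ENNReal.inv_mul_cancel hC.2.1 (measure_ne_top μ C)]; simp

variable [MeasurableSpace Ω] {μ : Measure Ω}

theorem cond_preimage_of_measurableSet_invariants {T : Ω → Ω} (hT : MeasurePreserving T μ μ)
    {A C : Set Ω} (hC : MeasurableSet[invariants T] C) (hA : MeasurableSet A) :
    μ[T ⁻¹' A | C] = μ[A | C] := by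
  rw [cond_apply hC.1, cond_apply hC.1, ← hT.measure_preimage (hC.1.inter hA).nullMeasurableSet,
    Set.preimage_inter, hC.2]

theorem measure_smul_cond [IsFiniteMeasure μ] (s : Set Ω) : μ s • μ[|s] = μ.restrict s := by
  by_cases hs : μ s = 0
  · simp [hs, Measure.restrict_eq_zero.mpr hs]
  · rw [ProbabilityTheory.cond, smul_smul, ENNReal.mul_inv_cancel hs (measure_ne_top μ s),
      one_smul]

variable {ι : Type*} [Fintype ι] {C : ι → Set Ω} (hC : ∀ k, MeasurableSet (C k))
  (hdisj : Pairwise (Disjoint on C)) (hcover : μ (⋃ k, C k)ᶜ = 0)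
include hC hdisj hcover

theorem eq_sum_measure_smul_cond [IsFiniteMeasure μ] : μ = ∑ k, μ (C k) • μ[|C k] :=
  calc μ = μ.restrict (⋃ k, C k) :=
        (Measure.restrict_eq_self_of_ae_mem (mem_ae_iff.mpr hcover)).symm
    _ = ∑ k, μ (C k) • μ[|C k] := by
      simp only [Measure.restrict_iUnion hdisj hC, Measure.sum_fintype, measure_smul_cond]

theorem sum_measure_eq_one [IsProbabilityMeasure μ] : ∑ k, μ (C k) = 1 := by
  have h := measure_iUnion hdisj hC (μ := μ)
  rw [tsum_fintype] at h
  exact h ▸ (prob_compl_eq_zero_iff (.iUnion hC)).mp hcover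

end Decomposition

section ConvexCombination

variable {Ω ι : Type*} [MeasurableSpace Ω] [Fintype ι] {l : ι → ℝ≥0∞} {μ : ι → Measure Ω}

theorem sum_smul_apply_le (hl : ∑ k, l k = 1) {A : Set Ω} {b : ℝ≥0∞} (h : ∀ k, μ k A ≤ b) :
    (∑ k, l k • μ k) A ≤ b :=
  calc (∑ k, l k • μ k) A = ∑ k, l k * μ k A := by simp [Measure.finsetSum_apply]
    _ ≤ ∑ k, l k * b := by gcongr with k; exact h k
    _ = b := by rw [← Finset.sum_mul, hl, one_mul]

theorem isProbabilityMeasure_sum_smul [∀ k, IsProbabilityMeasure (μ k)] (hl : ∑ k, l k = 1) :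
    IsProbabilityMeasure (∑ k, l k • μ k) :=
  ⟨by simp [Measure.finsetSum_apply, hl]⟩

end ConvexCombination

theorem stmt_5_general {Ω : Type*} [MeasurableSpace Ω] (T : Ω → Ω) (hT : Measurable T)
    (Θ : Set (Measure Ω))
    (hprob : ∀ P ∈ Θ, IsProbabilityMeasure P)
    (V : Set Ω → ℝ≥0∞)
    (hV : ∀ A : Set Ω, V A = ⨆ P ∈ Θ, P A)
    (hmax : ∀ P : Measure Ω, IsProbabilityMeasure P →
      (∀ A, MeasurableSet A → P A ≤ V A) → P ∈ Θ)
    (hcont : ∀ A : ℕ → Set Ω, (∀ n, MeasurableSet (A n)) → Antitone A →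
      (⋂ n, A n) = ∅ → Tendsto (fun n => V (A n)) atTop (nhds 0))
    (hVinv : ∀ A : Set Ω, MeasurableSet A → V (T ⁻¹' A) = V A)
    (hVerg : ∀ A : Set Ω, MeasurableSet A → T ⁻¹' A = A → V A = 0 ∨ V A = 1) :
    (∀ P ∈ Θ, (∀ A : Set Ω, MeasurableSet A → P (T ⁻¹' A) = P A) →
      ∃ (n : ℕ) (l : Fin n → ℝ≥0∞) (Ps : Fin n → Measure Ω),
        (∀ k, Ps k ∈ Θ ∧ (∀ A : Set Ω, MeasurableSet A → Ps k (T ⁻¹' A) = Ps k A) ∧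
          (∀ A : Set Ω, MeasurableSet A → T ⁻¹' A = A → Ps k A = 0 ∨ Ps k A = 1)) ∧
        (∑ k, l k) = 1 ∧ P = ∑ k, l k • Ps k) ∧
    (∀ (n : ℕ) (l : Fin n → ℝ≥0∞) (Ps : Fin n → Measure Ω),
      (∀ k, Ps k ∈ Θ ∧ (∀ A : Set Ω, MeasurableSet A → Ps k (T ⁻¹' A) = Ps k A) ∧
        (∀ A : Set Ω, MeasurableSet A → T ⁻¹' A = A → Ps k A = 0 ∨ Ps k A = 1)) →
      (∑ k, l k) = 1 →
      (∑ k, l k • Ps k) ∈ Θ ∧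
        (∀ A : Set Ω, MeasurableSet A →
          (∑ k, l k • Ps k) (T ⁻¹' A) = (∑ k, l k • Ps k) A)) := by
  obtain rfl : V = upperProb Θ := funext hV
  have herg : ∀ E, MeasurableSet[invariants T] E → upperProb Θ E = 0 ∨ upperProb Θ E = 1 :=
    fun E hE => hVerg E hE.1 hE.2
  refine ⟨fun P hPΘ hPinv => ?_, fun n l Ps hPs hl => ?_⟩
  · have := hprob P hPΘ
    have hP : MeasurePreserving T P P :=
      ⟨hT, Measure.ext fun A hA => (Measure.map_apply hT hA).trans (hPinv A hA)⟩
    obtain ⟨n, C, hatom, hdisj, hcover⟩ := exists_finite_isAtomOn (invariants_le T)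
      (exists_measure_eq_zero_of_pairwise_disjoint (invariants_le T) hcont herg
        (le_upperProb hPΘ))
    have hC k : MeasurableSet (C k) := (hatom k).1.1
    refine ⟨n, fun k => P (C k), fun k => P[|C k],
      fun k => ⟨?_, fun A hA => ?_, fun A hA hAT => ?_⟩,
      sum_measure_eq_one hC hdisj hcover, eq_sum_measure_smul_cond hC hdisj hcover⟩
    · exact hmax _ (cond_isProbabilityMeasure (hatom k).2.1) fun A hA =>
        cond_apply_le_upperProb hT hVinv herg hPΘ hP hA (hatom k).1
    · exact cond_preimage_of_measurableSet_invariants hP (hatom k).1 hA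
    · exact (hatom k).cond_eq_zero_or_one (invariants_le T) ⟨hA, hAT⟩
  · have (k : Fin n) : IsProbabilityMeasure (Ps k) := hprob _ (hPs k).1
    refine ⟨hmax _ (isProbabilityMeasure_sum_smul hl) fun A _ =>
      sum_smul_apply_le hl fun k => le_upperProb (hPs k).1 A, fun A hA => ?_⟩
    simp only [Measure.finsetSum_apply, Measure.smul_apply, (hPs _).2.1 A hA]

/-- If `V` is continuous, `T`-invariant and `T`-ergodic, then
`Θ₀ = co Θ*`: every `T`-invariant `P ∈ Θ` is a finite convex combination of
`T`-ergodic members of `Θ`, and conversely every such finite convex combination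
of elements of `Θ*` is a `T`-invariant member of `Θ`. -/
theorem stmt_5 {Ω : Type*} [MeasurableSpace Ω] (T : Ω → Ω) (hT : Measurable T)
    (Θ : Set (Measure Ω)) (hΘne : Θ.Nonempty)
    (hprob : ∀ P ∈ Θ, IsProbabilityMeasure P)
    (V : Set Ω → ℝ≥0∞)
    (hV : ∀ A : Set Ω, V A = ⨆ P ∈ Θ, P A)
    (hmax : ∀ P : Measure Ω, IsProbabilityMeasure P →
      (∀ A, MeasurableSet A → P A ≤ V A) → P ∈ Θ)
    (hcont : ∀ A : ℕ → Set Ω, (∀ n, MeasurableSet (A n)) → Antitone A →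
      (⋂ n, A n) = ∅ → Tendsto (fun n => V (A n)) atTop (nhds 0))
    (hVinv : ∀ A : Set Ω, MeasurableSet A → V (T ⁻¹' A) = V A)
    (hVerg : ∀ A : Set Ω, MeasurableSet A → T ⁻¹' A = A → V A = 0 ∨ V A = 1) :
    (∀ P ∈ Θ, (∀ A : Set Ω, MeasurableSet A → P (T ⁻¹' A) = P A) →
      ∃ (n : ℕ) (l : Fin n → ℝ≥0∞) (Ps : Fin n → Measure Ω),
        (∀ k, Ps k ∈ Θ ∧ (∀ A : Set Ω, MeasurableSet A → Ps k (T ⁻¹' A) = Ps k A) ∧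
          (∀ A : Set Ω, MeasurableSet A → T ⁻¹' A = A → Ps k A = 0 ∨ Ps k A = 1)) ∧
        (∑ k, l k) = 1 ∧ P = ∑ k, l k • Ps k) ∧
    (∀ (n : ℕ) (l : Fin n → ℝ≥0∞) (Ps : Fin n → Measure Ω),
      (∀ k, Ps k ∈ Θ ∧ (∀ A : Set Ω, MeasurableSet A → Ps k (T ⁻¹' A) = Ps k A) ∧
        (∀ A : Set Ω, MeasurableSet A → T ⁻¹' A = A → Ps k A = 0 ∨ Ps k A = 1)) →
      (∑ k, l k) = 1 →
      (∑ k, l k • Ps k) ∈ Θ ∧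
        (∀ A : Set Ω, MeasurableSet A →
          (∑ k, l k • Ps k) (T ⁻¹' A) = (∑ k, l k • Ps k) A)) :=
  stmt_5_general T hT Θ hprob V hV hmax hcont hVinv hVerg
end

section
/- Assume 𝕍 is continuous, T-invariant, and T-ergodic, and let Θ* = {P_1, …, P_m} be the (finite) set of T-ergodic probability measures in Θ. Let D_1, …, D_m ∈ 𝓘 be pairwise disjoint sets with P_i(D_i) = 1 for each i. Then for every P ∈ Θ₀ and every bounded measurable ξ : Ω → ℝ, for P-almost every ω one has lim_{n→∞} (1/n) Σ_{k=0}^{n-1} ξ(T^k ω) = Σ_{i=1}^m E_{P_i}[ξ] · 1_{D_i}(ω). -/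
/-!
Every invariant set of upper probability one contains an invariant "atom" `E` with `𝕍(E) = 1`
that no invariant set splits into two pieces of positive upper probability: otherwise repeated
splitting gives a decreasing sequence of invariant sets contradicting the continuity of `𝕍`.
Measures of `Θ` almost concentrated on `E`, averaged along the orbits of `T` and passed to an
ultrafilter limit, give a `T`-invariant probability dominated by `𝕍` (continuity makes the limit
countably additive), hence a member of `Θ`; it lives on `E`, so the atom property makes it
ergodic, i.e. it is one of the `P_i`. For the invariant set where the time averages of `ξ` do not
converge to `∑ E_{P_i}[ξ] 1_{D_i}`, Birkhoff's theorem shows that it is null for every `P_i`, so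
it cannot have upper probability one; by ergodicity of `𝕍` it has upper probability zero.
-/

open MeasureTheory Filter Topology Set
open scoped ENNReal

section Birkhoff

variable {α : Type*} {T : α → α} {g : α → ℝ}

def maxBirkhoffSum (T : α → α) (g : α → ℝ) (N : ℕ) : α → ℝ :=
  (Finset.range (N + 1)).sup' Finset.nonempty_range_add_one (birkhoffSum T g)

theorem maxBirkhoffSum_apply (N : ℕ) (x : α) :
    maxBirkhoffSum T g N x =
      (Finset.range (N + 1)).sup' Finset.nonempty_range_add_one fun n => birkhoffSum T g n x :=
  Finset.sup'_apply _ _ _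

theorem birkhoffSum_le_maxBirkhoffSum {n N : ℕ} (hn : n ≤ N) (x : α) :
    birkhoffSum T g n x ≤ maxBirkhoffSum T g N x := by
  rw [maxBirkhoffSum_apply]
  exact Finset.le_sup' (fun n => birkhoffSum T g n x) (Finset.mem_range_succ_iff.2 hn)

theorem maxBirkhoffSum_nonneg (N : ℕ) (x : α) : 0 ≤ maxBirkhoffSum T g N x := by
  simpa using birkhoffSum_le_maxBirkhoffSum (T := T) (g := g) N.zero_le x

theorem exists_maxBirkhoffSum_eq (N : ℕ) (x : α) :
    ∃ n ≤ N, maxBirkhoffSum T g N x = birkhoffSum T g n x := by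
  obtain ⟨n, hn, h⟩ := Finset.exists_mem_eq_sup' Finset.nonempty_range_add_one
    fun n => birkhoffSum T g n x
  exact ⟨n, Finset.mem_range_succ_iff.1 hn, by rw [maxBirkhoffSum_apply, h]⟩

theorem maxBirkhoffSum_le_add_comp {N : ℕ} {x : α} (hx : 0 < maxBirkhoffSum T g N x) :
    maxBirkhoffSum T g N x ≤ g x + maxBirkhoffSum T g N (T x) := by
  obtain ⟨_ | n, hn, heq⟩ := exists_maxBirkhoffSum_eq (T := T) (g := g) N x
  · simp [heq] at hx
  · rw [heq, birkhoffSum_succ']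
    exact (add_le_add_iff_left _).2 (birkhoffSum_le_maxBirkhoffSum (by omega) _)

theorem monotone_maxBirkhoffSum : Monotone (maxBirkhoffSum T g) := fun _ _ h =>
  Finset.sup'_mono _ (Finset.range_subset_range.2 (by omega)) _

theorem isBounded_range_of_abs_le {C : ℝ} (hC : ∀ x, |g x| ≤ C) :
    Bornology.IsBounded (range g) :=
  isBounded_iff_forall_norm_le.2 ⟨C, by rintro _ ⟨x, rfl⟩; exact hC x⟩

theorem exists_rat_frequently_lt_of_tendsto_sub {u v : ℕ → ℝ}
    (h : Tendsto (fun n => u n - v n) atTop (𝓝 0)) {β : ℝ}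
    (hu : ∃ r : ℚ, β < r ∧ ∃ᶠ n in atTop, (r : ℝ) < u n) :
    ∃ r : ℚ, β < r ∧ ∃ᶠ n in atTop, (r : ℝ) < v n := by
  obtain ⟨r, hβr, hfr⟩ := hu
  obtain ⟨r', hβr', hr'r⟩ := exists_rat_btwn hβr
  have hclose := h.eventually (gt_mem_nhds (sub_pos.2 hr'r))
  exact ⟨r', hβr', (hfr.and_eventually hclose).mono fun n ⟨h₁, h₂⟩ => by linarith⟩

/-- `{x | β < limsup (birkhoffAverage ℝ T g · x)}`, written without `limsup`. -/
def birkhoffLimsupGt (T : α → α) (g : α → ℝ) (β : ℝ) : Set α :=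
  {x | ∃ r : ℚ, β < r ∧ ∃ᶠ n in atTop, (r : ℝ) < birkhoffAverage ℝ T g n x}

theorem preimage_birkhoffLimsupGt {C : ℝ} (hC : ∀ x, |g x| ≤ C) (β : ℝ) :
    T ⁻¹' birkhoffLimsupGt T g β = birkhoffLimsupGt T g β := by
  ext x
  have hd :=
    tendsto_birkhoffAverage_apply_sub_birkhoffAverage' ℝ (isBounded_range_of_abs_le hC) T x
  exact ⟨exists_rat_frequently_lt_of_tendsto_sub hd,
    exists_rat_frequently_lt_of_tendsto_sub (by simpa using hd.neg)⟩

theorem birkhoffLimsupGt_subset_iUnion (β : ℝ) :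
    birkhoffLimsupGt T g β ⊆ ⋃ N, {x | 0 < maxBirkhoffSum T (fun x => g x - β) N x} := by
  rintro x ⟨r, hβr, hfr⟩
  obtain ⟨n, hrn, hn⟩ := (hfr.and_eventually (eventually_gt_atTop 0)).exists
  have hsum : birkhoffSum T (fun x => g x - β) n x = birkhoffSum T g n x - n * β := by
    simp [birkhoffSum, Finset.sum_sub_distrib]
  rw [birkhoffAverage, smul_eq_mul, inv_mul_eq_div, lt_div_iff₀ (Nat.cast_pos.2 hn)] at hrn
  refine mem_iUnion.2 ⟨n, lt_of_lt_of_le ?_ (birkhoffSum_le_maxBirkhoffSum le_rfl x)⟩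
  rw [hsum]
  nlinarith

theorem preimage_setOf_tendsto_birkhoffAverage {C : ℝ} (hC : ∀ x, |g x| ≤ C) {L : α → ℝ}
    (hL : ∀ x, L (T x) = L x) :
    T ⁻¹' {x | Tendsto (birkhoffAverage ℝ T g · x) atTop (𝓝 (L x))} =
      {x | Tendsto (birkhoffAverage ℝ T g · x) atTop (𝓝 (L x))} := by
  ext x
  have hd :=
    tendsto_birkhoffAverage_apply_sub_birkhoffAverage' ℝ (isBounded_range_of_abs_le hC) T x
  change Tendsto _ atTop (𝓝 (L (T x))) ↔ Tendsto _ atTop (𝓝 (L x))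
  rw [hL x]
  exact ⟨fun h => by simpa using h.sub hd, fun h => by simpa using h.add hd⟩

variable [MeasurableSpace α] {μ : Measure α}

theorem measurable_birkhoffSum (hT : Measurable T) (hg : Measurable g) (n : ℕ) :
    Measurable (birkhoffSum T g n) :=
  Finset.measurable_sum _ fun k _ => hg.comp (hT.iterate k)

theorem measurable_birkhoffAverage (hT : Measurable T) (hg : Measurable g) (n : ℕ) :
    Measurable (birkhoffAverage ℝ T g n) :=
  (measurable_birkhoffSum hT hg n).const_smul (n : ℝ)⁻¹

theorem measurable_maxBirkhoffSum (hT : Measurable T) (hg : Measurable g) (N : ℕ) :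
    Measurable (maxBirkhoffSum T g N) :=
  Finset.measurable_sup' _ fun n _ => measurable_birkhoffSum hT hg n

theorem MeasureTheory.MeasurePreserving.integrable_birkhoffSum (hT : MeasurePreserving T μ μ)
    (hg : Integrable g μ) (n : ℕ) : Integrable (birkhoffSum T g n) μ :=
  integrable_finsetSum _ fun k _ => (hT.iterate k).integrable_comp_of_integrable hg

theorem MeasureTheory.MeasurePreserving.integrable_maxBirkhoffSum (hT : MeasurePreserving T μ μ)
    (hg : Integrable g μ) (N : ℕ) : Integrable (maxBirkhoffSum T g N) μ :=
  Finset.sup'_induction (p := (Integrable · μ)) _ _ (fun _ h₁ _ h₂ => h₁.sup h₂)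
    fun n _ => hT.integrable_birkhoffSum hg n

theorem MeasureTheory.MeasurePreserving.setIntegral_maxBirkhoffSum_pos_nonneg
    (hT : MeasurePreserving T μ μ) (hg : Measurable g) (hgi : Integrable g μ) (N : ℕ) :
    0 ≤ ∫ x in {x | 0 < maxBirkhoffSum T g N x}, g x ∂μ := by
  set M := maxBirkhoffSum T g N
  set E := {x | 0 < M x}
  have hM : Integrable M μ := hT.integrable_maxBirkhoffSum hgi N
  have hMT : Integrable (M ∘ T) μ := hT.integrable_comp_of_integrable hM
  have hE : MeasurableSet E :=
    measurableSet_lt measurable_const (measurable_maxBirkhoffSum hT.measurable hg N)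
  have hMT_eq : ∫ x, M (T x) ∂μ = ∫ x, M x ∂μ := by
    rw [← integral_map hT.measurable.aemeasurable (hT.map_eq.symm ▸ hM.aestronglyMeasurable),
      hT.map_eq]
  have key : ∫ x, M x ∂μ ≤ ∫ x in E, g x ∂μ + ∫ x, M x ∂μ :=
    calc ∫ x, M x ∂μ = ∫ x in E, M x ∂μ :=
          (setIntegral_eq_integral_of_forall_compl_eq_zero fun x hx =>
            le_antisymm (not_lt.1 hx) (maxBirkhoffSum_nonneg N x)).symm
      _ ≤ ∫ x in E, (g x + M (T x)) ∂μ :=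
          setIntegral_mono_on hM.integrableOn (hgi.add hMT).integrableOn hE
            fun x hx => maxBirkhoffSum_le_add_comp hx
      _ = ∫ x in E, g x ∂μ + ∫ x in E, M (T x) ∂μ :=
          integral_add hgi.integrableOn hMT.integrableOn
      _ ≤ ∫ x in E, g x ∂μ + ∫ x, M x ∂μ := by
          rw [← hMT_eq]
          exact (add_le_add_iff_left _).2 (setIntegral_le_integral hMT
            (ae_of_all _ fun x => maxBirkhoffSum_nonneg N (T x)))
  linarith

theorem measurableSet_birkhoffLimsupGt (hT : Measurable T) (hg : Measurable g) (β : ℝ) :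
    MeasurableSet (birkhoffLimsupGt T g β) := by
  have : birkhoffLimsupGt T g β = ⋃ (r : ℚ) (_ : β < r),
      limsup (fun n => {x | (r : ℝ) < birkhoffAverage ℝ T g n x}) atTop := by
    ext x
    simp [birkhoffLimsupGt, mem_limsup_iff_frequently_mem]
  rw [this]
  exact .iUnion fun r => .iUnion fun _ => MeasurableSet.measurableSet_limsup fun n =>
    measurableSet_lt measurable_const (measurable_birkhoffAverage hT hg n)

theorem Ergodic.measure_birkhoffLimsupGt_eq_zero [IsProbabilityMeasure μ] (hT : Ergodic T μ)
    (hg : Measurable g) {C : ℝ} (hC : ∀ x, |g x| ≤ C) {β : ℝ} (hβ : ∫ x, g x ∂μ < β) :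
    μ (birkhoffLimsupGt T g β) = 0 := by
  refine (hT.measure_self_or_compl_eq_zero (measurableSet_birkhoffLimsupGt hT.measurable hg β)
    (preimage_birkhoffLimsupGt hC β)).resolve_right fun hBc => ?_
  -- If this invariant set were conull, the maximal ergodic theorem for `g - β` gives `β ≤ ∫ g`.
  set g' : α → ℝ := fun x => g x - β
  have hgi : Integrable g μ := Integrable.of_bound hg.aestronglyMeasurable C (ae_of_all _ hC)
  have hg'i : Integrable g' μ := hgi.sub (integrable_const β)
  set E : ℕ → Set α := fun N => {x | 0 < maxBirkhoffSum T g' N x}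
  have hE : ∀ N, MeasurableSet (E N) := fun N =>
    measurableSet_lt measurable_const (measurable_maxBirkhoffSum hT.measurable (hg.sub_const β) N)
  have hE_nonneg : 0 ≤ ∫ x in ⋃ N, E N, g' x ∂μ :=
    ge_of_tendsto' (tendsto_setIntegral_of_monotone hE
      (fun _ _ hNM _ hx => hx.trans_le (monotone_maxBirkhoffSum hNM _)) hg'i.integrableOn)
      fun N => hT.toMeasurePreserving.setIntegral_maxBirkhoffSum_pos_nonneg (hg.sub_const β) hg'i N
  have hE_eq : ∫ x in ⋃ N, E N, g' x ∂μ = ∫ x, g x ∂μ - β := by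
    rw [Measure.restrict_eq_self_of_ae_mem (s := ⋃ N, E N) (mem_ae_iff.2 (measure_mono_null
      (compl_subset_compl.2 (birkhoffLimsupGt_subset_iUnion β)) hBc)),
      integral_sub hgi (integrable_const β)]
    simp
  linarith

theorem Ergodic.ae_eventually_birkhoffAverage_lt [IsProbabilityMeasure μ] (hT : Ergodic T μ)
    (hg : Measurable g) {C : ℝ} (hC : ∀ x, |g x| ≤ C) :
    ∀ᵐ x ∂μ, ∀ b, ∫ x, g x ∂μ < b → ∀ᶠ n in atTop, birkhoffAverage ℝ T g n x < b := by
  have hnull : ∀ᵐ x ∂μ, ∀ q : ℚ, ∫ x, g x ∂μ < q → x ∉ birkhoffLimsupGt T g q := by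
    refine ae_all_iff.2 fun q => ?_
    by_cases hq : ∫ x, g x ∂μ < q
    · filter_upwards [measure_eq_zero_iff_ae_notMem.1
        (hT.measure_birkhoffLimsupGt_eq_zero hg hC hq)] with x hx _ using hx
    · exact ae_of_all _ fun x h => absurd h hq
  filter_upwards [hnull] with x hx b hb
  obtain ⟨q₁, h₁, h₁₂⟩ := exists_rat_btwn hb
  obtain ⟨q₂, h₁₂', h₂⟩ := exists_rat_btwn h₁₂
  have := not_frequently.1 fun hf => hx q₁ h₁ ⟨q₂, h₁₂', hf⟩
  exact this.mono fun n hn => (not_lt.1 hn).trans_lt h₂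

theorem Ergodic.ae_tendsto_birkhoffAverage [IsProbabilityMeasure μ] (hT : Ergodic T μ)
    (hg : Measurable g) {C : ℝ} (hC : ∀ x, |g x| ≤ C) :
    ∀ᵐ x ∂μ, Tendsto (birkhoffAverage ℝ T g · x) atTop (𝓝 (∫ x, g x ∂μ)) := by
  filter_upwards [hT.ae_eventually_birkhoffAverage_lt hg hC,
    hT.ae_eventually_birkhoffAverage_lt hg.neg (g := -g)
      fun x => (abs_neg (g x)).trans_le (hC x)]
    with x hup hlow
  refine tendsto_order.2 ⟨fun b hb => ?_, hup⟩
  have := hlow (-b) (by rw [Pi.neg_def, integral_neg]; linarith)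
  simp only [birkhoffAverage_neg, Pi.neg_apply] at this
  exact this.mono fun n hn => by linarith

end Birkhoff

section UpperProbability

variable {Ω : Type*} [MeasurableSpace Ω] {T : Ω → Ω} {V : Set Ω → ℝ≥0∞}

def ContinuousAtEmpty (V : Set Ω → ℝ≥0∞) : Prop :=
  ∀ A : ℕ → Set Ω, (∀ n, MeasurableSet (A n)) → Antitone A → (⋂ n, A n) = ∅ →
    Tendsto (fun n => V (A n)) atTop (𝓝 0)

theorem ContinuousAtEmpty.tendsto_iUnion_add {g : ℕ → Set Ω} (hV : ContinuousAtEmpty V)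
    (hg : ∀ n, MeasurableSet (g n)) (hd : Pairwise (Function.onFun Disjoint g)) :
    Tendsto (fun K => V (⋃ n, g (n + K))) atTop (𝓝 0) := by
  refine hV _ (fun K => .iUnion fun n => hg _) (fun K L hKL => ?_) ?_
  · refine iUnion_subset fun n => subset_iUnion_of_subset (n + (L - K)) ?_
    rw [add_assoc, Nat.sub_add_cancel hKL]
  · refine eq_empty_of_forall_notMem fun x hx => ?_
    obtain ⟨i, hi⟩ := mem_iUnion.1 (mem_iInter.1 hx 0)
    obtain ⟨j, hj⟩ := mem_iUnion.1 (mem_iInter.1 hx (i + 1))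
    exact disjoint_left.1 (hd (by omega : i + 0 ≠ j + (i + 1))) hi hj

theorem ContinuousAtEmpty.exists_measure_tendsto {ι : Type*} (hV : ContinuousAtEmpty V)
    (U : Ultrafilter ι) (ν : ι → Measure Ω) [∀ i, IsProbabilityMeasure (ν i)]
    (hνV : ∀ i A, MeasurableSet A → ν i A ≤ V A) :
    ∃ μ : Measure Ω, IsProbabilityMeasure μ ∧ (∀ A, MeasurableSet A → μ A ≤ V A) ∧
      ∀ A, MeasurableSet A → Tendsto (fun i => ν i A) U (𝓝 (μ A)) := by
  set m : Set Ω → ℝ≥0∞ := fun A => (U.map fun i => ν i A).lim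
  have hm : ∀ A, Tendsto (fun i => ν i A) U (𝓝 (m A)) := fun A => by
    rw [Tendsto, ← Ultrafilter.coe_map]
    exact Ultrafilter.le_nhds_lim _
  have hmV : ∀ A, MeasurableSet A → m A ≤ V A := fun A hA =>
    le_of_tendsto' (hm A) fun i => hνV i A hA
  have hm_iUnion : ∀ g : ℕ → Set Ω, (∀ n, MeasurableSet (g n)) →
      Pairwise (Function.onFun Disjoint g) → m (⋃ n, g n) = ∑' n, m (g n) := by
    intro g hg hd
    have hsplit : ∀ K, m (⋃ n, g n) = ∑ n ∈ Finset.range K, m (g n) + m (⋃ n, g (n + K)) := by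
      intro K
      refine tendsto_nhds_unique (hm _)
        (((tendsto_finsetSum _ fun n _ => hm (g n)).add (hm _)).congr fun i => ?_)
      rw [measure_iUnion hd hg, measure_iUnion (hd.comp_of_injective (add_left_injective K))
        fun n => hg _]
      exact ENNReal.summable.sum_add_tsum_nat_add'
    have htail : Tendsto (fun K => m (⋃ n, g (n + K))) atTop (𝓝 0) :=
      tendsto_of_tendsto_of_tendsto_of_le_of_le tendsto_const_nhds (hV.tendsto_iUnion_add hg hd)
        (fun _ => zero_le) fun K => hmV _ (.iUnion fun n => hg _)
    have hlim := (ENNReal.tendsto_nat_tsum fun n => m (g n)).add htail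
    rw [add_zero] at hlim
    exact tendsto_nhds_unique tendsto_const_nhds (hlim.congr fun K => (hsplit K).symm)
  refine ⟨Measure.ofMeasurable (fun A _ => m A) ?_ hm_iUnion, ⟨?_⟩, fun A hA => ?_,
    fun A hA => ?_⟩
  · exact tendsto_nhds_unique (hm ∅) (by simp)
  · rw [Measure.ofMeasurable_apply _ .univ]
    exact tendsto_nhds_unique (hm univ) (by simp)
  · rw [Measure.ofMeasurable_apply _ hA]
    exact hmV A hA
  · rw [Measure.ofMeasurable_apply _ hA]
    exact hm A

theorem measure_preimage_eq_of_le {μ : Measure Ω} [IsProbabilityMeasure μ] (hT : Measurable T)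
    (h : ∀ A, MeasurableSet A → μ (T ⁻¹' A) ≤ μ A) {A : Set Ω} (hA : MeasurableSet A) :
    μ (T ⁻¹' A) = μ A := by
  refine le_antisymm (h A hA) ?_
  have := h Aᶜ hA.compl
  rwa [preimage_compl, prob_compl_eq_one_sub (hT hA), prob_compl_eq_one_sub hA,
    ENNReal.sub_le_sub_iff_left prob_le_one ENNReal.one_ne_top] at this

theorem ergodic_of_measure_preimage_eq {μ : Measure Ω} [IsProbabilityMeasure μ]
    (hT : Measurable T) (hinv : ∀ A, MeasurableSet A → μ (T ⁻¹' A) = μ A)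
    (herg : ∀ A, MeasurableSet A → T ⁻¹' A = A → μ A = 0 ∨ μ A = 1) : Ergodic T μ where
  measurable := hT
  map_eq := Measure.ext fun A hA => by rw [Measure.map_apply hT hA, hinv A hA]
  aeconst_set A hA hAinv := by
    rw [eventuallyConst_set', ae_eq_empty, ae_eq_univ, prob_compl_eq_zero_iff hA]
    exact herg A hA hAinv

noncomputable def cesaroMeasure (T : Ω → Ω) (μ : Measure Ω) (n : ℕ) : Measure Ω :=
  (n : ℝ≥0∞)⁻¹ • ∑ j ∈ Finset.range n, μ.map T^[j]

theorem cesaroMeasure_apply (hT : Measurable T) (μ : Measure Ω) (n : ℕ) {A : Set Ω}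
    (hA : MeasurableSet A) :
    cesaroMeasure T μ n A = (n : ℝ≥0∞)⁻¹ * ∑ j ∈ Finset.range n, μ (T^[j] ⁻¹' A) := by
  simp only [cesaroMeasure, Measure.smul_apply, Measure.finsetSum_apply, smul_eq_mul,
    Measure.map_apply (hT.iterate _) hA]

theorem cesaroMeasure_apply_of_preimage_eq (hT : Measurable T) (μ : Measure Ω) {n : ℕ}
    (hn : n ≠ 0) {A : Set Ω} (hA : MeasurableSet A) (hAinv : T ⁻¹' A = A) :
    cesaroMeasure T μ n A = μ A := by
  have hpre : ∀ j, T^[j] ⁻¹' A = A := fun j => Function.IsFixedPt.preimage_iterate hAinv j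
  rw [cesaroMeasure_apply hT μ n hA]
  simp only [hpre, Finset.sum_const, Finset.card_range, nsmul_eq_mul]
  exact ENNReal.inv_mul_cancel_left (Nat.cast_ne_zero.2 hn) (ENNReal.natCast_ne_top n)

theorem isProbabilityMeasure_cesaroMeasure (hT : Measurable T) (μ : Measure Ω)
    [IsProbabilityMeasure μ] {n : ℕ} (hn : n ≠ 0) : IsProbabilityMeasure (cesaroMeasure T μ n) :=
  ⟨by rw [cesaroMeasure_apply_of_preimage_eq hT μ hn .univ preimage_univ, measure_univ]⟩

theorem cesaroMeasure_le (hT : Measurable T) {μ : Measure Ω} (n : ℕ)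
    (hμV : ∀ A, MeasurableSet A → μ A ≤ V A) (hVinv : ∀ A, MeasurableSet A → V (T ⁻¹' A) = V A)
    {A : Set Ω} (hA : MeasurableSet A) : cesaroMeasure T μ n A ≤ V A := by
  have hVit : ∀ j, V (T^[j] ⁻¹' A) = V A := by
    intro j
    induction j with
    | zero => rfl
    | succ j ih => rw [Function.iterate_succ, preimage_comp, hVinv _ ((hT.iterate j) hA), ih]
  rw [cesaroMeasure_apply hT μ n hA]
  calc (n : ℝ≥0∞)⁻¹ * ∑ j ∈ Finset.range n, μ (T^[j] ⁻¹' A)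
      ≤ (n : ℝ≥0∞)⁻¹ * ∑ j ∈ Finset.range n, V A := by
        gcongr with j
        exact (hμV _ ((hT.iterate j) hA)).trans_eq (hVit j)
    _ ≤ V A := by
        rw [Finset.sum_const, Finset.card_range, nsmul_eq_mul, ← mul_assoc]
        exact mul_le_of_le_one_left' (ENNReal.inv_mul_le_one _)

theorem cesaroMeasure_preimage_le (hT : Measurable T) (μ : Measure Ω) [IsProbabilityMeasure μ]
    (n : ℕ) {A : Set Ω} (hA : MeasurableSet A) :
    cesaroMeasure T μ n (T ⁻¹' A) ≤ cesaroMeasure T μ n A + (n : ℝ≥0∞)⁻¹ := by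
  set u : ℕ → ℝ≥0∞ := fun j => μ (T^[j] ⁻¹' A)
  have htelescope : ∑ j ∈ Finset.range n, u (j + 1) ≤ ∑ j ∈ Finset.range n, u j + 1 :=
    calc ∑ j ∈ Finset.range n, u (j + 1) ≤ ∑ j ∈ Finset.range (n + 1), u j := by
          rw [Finset.sum_range_succ']
          exact le_self_add
      _ ≤ ∑ j ∈ Finset.range n, u j + 1 := by
          rw [Finset.sum_range_succ]
          gcongr
          exact prob_le_one
  rw [cesaroMeasure_apply hT μ n (hT hA), cesaroMeasure_apply hT μ n hA]
  have hshift : ∀ j, T^[j] ⁻¹' (T ⁻¹' A) = T^[j + 1] ⁻¹' A := fun j => by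
    rw [Function.iterate_succ', preimage_comp]
  simp_rw [hshift]
  calc (n : ℝ≥0∞)⁻¹ * ∑ j ∈ Finset.range n, u (j + 1)
      ≤ (n : ℝ≥0∞)⁻¹ * (∑ j ∈ Finset.range n, u j + 1) := by gcongr
    _ = _ := by rw [mul_add, mul_one]

theorem ContinuousAtEmpty.exists_invariant_measure (hV : ContinuousAtEmpty V) (hT : Measurable T)
    (hVinv : ∀ A, MeasurableSet A → V (T ⁻¹' A) = V A) {E : Set Ω} (hE : MeasurableSet E)
    (hEinv : T ⁻¹' E = E) (Q : ℕ → Measure Ω) [∀ k, IsProbabilityMeasure (Q k)]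
    (hQV : ∀ k A, MeasurableSet A → Q k A ≤ V A) (hQE : Tendsto (fun k => Q k E) atTop (𝓝 1)) :
    ∃ R : Measure Ω, IsProbabilityMeasure R ∧ (∀ A, MeasurableSet A → R A ≤ V A) ∧
      (∀ A, MeasurableSet A → R (T ⁻¹' A) = R A) ∧ R E = 1 := by
  set ν : ℕ → Measure Ω := fun k => cesaroMeasure T (Q k) (k + 1)
  have : ∀ k, IsProbabilityMeasure (ν k) := fun k =>
    isProbabilityMeasure_cesaroMeasure hT (Q k) k.succ_ne_zero
  set U := Ultrafilter.of (atTop : Filter ℕ)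
  have hU : (U : Filter ℕ) ≤ atTop := Ultrafilter.of_le _
  obtain ⟨R, hRprob, hRV, hR⟩ := hV.exists_measure_tendsto U ν
    fun k A hA => cesaroMeasure_le hT _ (hQV k) hVinv hA
  refine ⟨R, hRprob, hRV, fun A hA => measure_preimage_eq_of_le hT (fun A hA => ?_) hA, ?_⟩
  · have hinv : Tendsto (fun k : ℕ => ((k + 1 : ℕ) : ℝ≥0∞)⁻¹) U (𝓝 0) :=
      (ENNReal.tendsto_inv_nat_nhds_zero.comp (tendsto_add_atTop_nat 1)).mono_left hU
    refine le_of_tendsto_of_tendsto' (hR _ (hT hA)) ?_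
      fun k => cesaroMeasure_preimage_le hT _ _ hA
    simpa using (hR A hA).add hinv
  · refine tendsto_nhds_unique (hR E hE) ((hQE.mono_left hU).congr fun k => ?_)
    exact (cesaroMeasure_apply_of_preimage_eq hT _ k.succ_ne_zero hE hEinv).symm

def IsInvariantAtom (V : Set Ω → ℝ≥0∞) (T : Ω → Ω) (E : Set Ω) : Prop :=
  ∀ A, MeasurableSet A → T ⁻¹' A = A → V (A ∩ E) = 0 ∨ V (E \ A) = 0

theorem ContinuousAtEmpty.exists_isInvariantAtom_subset (hV : ContinuousAtEmpty V)
    (hVmono : Monotone V) (hVerg : ∀ A, MeasurableSet A → T ⁻¹' A = A → V A = 0 ∨ V A = 1)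
    {G : Set Ω} (hG : MeasurableSet G) (hGinv : T ⁻¹' G = G) (hG1 : V G = 1) :
    ∃ E ⊆ G, MeasurableSet E ∧ T ⁻¹' E = E ∧ V E = 1 ∧ IsInvariantAtom V T E := by
  by_contra! hno
  set P : Set Ω → Prop := fun E => E ⊆ G ∧ MeasurableSet E ∧ T ⁻¹' E = E ∧ V E = 1
  have hsplit : ∀ E, P E →
      ∃ A, MeasurableSet A ∧ T ⁻¹' A = A ∧ V (A ∩ E) = 1 ∧ V (E \ A) = 1 := by
    rintro E ⟨hEG, hE, hEinv, hE1⟩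
    obtain ⟨A, hA, hAinv, h₁, h₂⟩ : ∃ A, MeasurableSet A ∧ T ⁻¹' A = A ∧
        V (A ∩ E) ≠ 0 ∧ V (E \ A) ≠ 0 := by
      simpa [IsInvariantAtom] using hno E hEG hE hEinv hE1
    refine ⟨A, hA, hAinv, (hVerg _ (hA.inter hE) ?_).resolve_left h₁,
      (hVerg _ (hE.diff hA) ?_).resolve_left h₂⟩
    · rw [preimage_inter, hAinv, hEinv]
    · rw [preimage_sdiff, hAinv, hEinv]
  choose! A hA hAinv hA₁ hA₂ using hsplit
  set S : ℕ → Set Ω := fun n => (fun E => A E ∩ E)^[n] G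
  have hS_succ : ∀ n, S (n + 1) = A (S n) ∩ S n := fun n => Function.iterate_succ_apply' _ n G
  have hSP : ∀ n, P (S n) := by
    intro n
    induction n with
    | zero => exact ⟨subset_rfl, hG, hGinv, hG1⟩
    | succ n ih =>
      have ⟨hSG, hS, hSinv, _⟩ := ih
      rw [hS_succ]
      exact ⟨inter_subset_right.trans hSG, (hA _ ⟨hSG, hS, hSinv, ih.2.2.2⟩).inter hS,
        by rw [preimage_inter, hAinv _ ih, hSinv], hA₁ _ ih⟩
  have hS_anti : Antitone S := antitone_nat_of_succ_le fun n => by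
    rw [hS_succ]
    exact inter_subset_right
  have htendsto := hV (fun n => S n \ ⋂ m, S m)
    (fun n => (hSP n).2.1.diff (.iInter fun m => (hSP m).2.1))
    (fun m n hmn => sdiff_subset_sdiff_left (hS_anti hmn))
    (eq_empty_of_forall_notMem fun x hx =>
      (mem_iInter.1 hx 0).2 (mem_iInter.2 fun m => (mem_iInter.1 hx m).1))
  have hge : ∀ n, 1 ≤ V (S n \ ⋂ m, S m) := fun n =>
    calc 1 = V (S n \ A (S n)) := (hA₂ _ (hSP n)).symm
      _ ≤ V (S n \ ⋂ m, S m) := hVmono (sdiff_subset_sdiff_right fun x hx =>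
          (hS_succ n ▸ mem_iInter.1 hx (n + 1)).1)
  exact absurd (ge_of_tendsto' htendsto hge) (by simp)

theorem IsInvariantAtom.prob_eq_zero_or_one {R : Measure Ω} [IsProbabilityMeasure R]
    {E : Set Ω} (hE : IsInvariantAtom V T E) (hRV : ∀ A, MeasurableSet A → R A ≤ V A)
    (hEm : MeasurableSet E) (hRE : R E = 1) {A : Set Ω} (hA : MeasurableSet A)
    (hAinv : T ⁻¹' A = A) :
    R A = 0 ∨ R A = 1 := by
  have hREc : R Eᶜ = 0 := (prob_compl_eq_zero_iff hEm).2 hRE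
  rcases hE A hA hAinv with h | h
  · left
    rw [← measure_inter_conull hREc]
    exact le_antisymm ((hRV _ (hA.inter hEm)).trans_eq h) zero_le
  · right
    rw [← prob_compl_eq_zero_iff hA, ← measure_inter_conull hREc, inter_comm, ← sdiff_eq]
    exact le_antisymm ((hRV _ (hEm.diff hA)).trans_eq h) zero_le

theorem exists_ergodic_mem_of_upperProb_eq_one (hT : Measurable T) {Θ : Set (Measure Ω)}
    (hprob : ∀ P ∈ Θ, IsProbabilityMeasure P) (hV : ∀ A, V A = ⨆ P ∈ Θ, P A)
    (hmax : ∀ P : Measure Ω, IsProbabilityMeasure P →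
      (∀ A, MeasurableSet A → P A ≤ V A) → P ∈ Θ)
    (hcont : ContinuousAtEmpty V) (hVinv : ∀ A, MeasurableSet A → V (T ⁻¹' A) = V A)
    (hVerg : ∀ A, MeasurableSet A → T ⁻¹' A = A → V A = 0 ∨ V A = 1) {B : Set Ω}
    (hB : MeasurableSet B) (hBinv : T ⁻¹' B = B) (hB1 : V B = 1) :
    ∃ R ∈ Θ, Ergodic T R ∧ R B = 1 := by
  have hVmono : Monotone V := fun A A' h => by
    rw [hV, hV]
    exact iSup₂_mono fun P _ => measure_mono h
  obtain ⟨E, hEB, hE, hEinv, hE1, hatom⟩ :=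
    hcont.exists_isInvariantAtom_subset hVmono hVerg hB hBinv hB1
  have hQ : ∀ k : ℕ, ∃ Q ∈ Θ, 1 - (k : ℝ≥0∞)⁻¹ < Q E := fun k => lt_biSup_iff.1 <| by
    rw [← hV, hE1]
    exact ENNReal.sub_lt_self ENNReal.one_ne_top one_ne_zero (by simp)
  choose Q hQΘ hQE using hQ
  have := fun k => hprob _ (hQΘ k)
  have hlow : Tendsto (fun k : ℕ => 1 - (k : ℝ≥0∞)⁻¹) atTop (𝓝 1) := by
    simpa using ENNReal.Tendsto.sub tendsto_const_nhds ENNReal.tendsto_inv_nat_nhds_zero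
      (Or.inl ENNReal.one_ne_top)
  have hlim : Tendsto (fun k => Q k E) atTop (𝓝 1) :=
    tendsto_of_tendsto_of_tendsto_of_le_of_le hlow tendsto_const_nhds (fun k => (hQE k).le)
      fun k => prob_le_one
  obtain ⟨R, hR, hRV, hRinv, hRE⟩ := hcont.exists_invariant_measure hT hVinv hE hEinv Q
    (fun k A _ => hV A ▸ le_biSup (fun P : Measure Ω => P A) (hQΘ k)) hlim
  exact ⟨R, hmax R hR hRV, ergodic_of_measure_preimage_eq hT hRinv
    fun A hA hAinv => hatom.prob_eq_zero_or_one hRV hE hRE hA hAinv,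
    le_antisymm prob_le_one (hRE ▸ measure_mono hEB)⟩

end UpperProbability

theorem sum_indicator_const_apply_of_mem {α ι : Type*} [Fintype ι] {D : ι → Set α}
    (hD : Pairwise (Function.onFun Disjoint D)) (c : ι → ℝ) {j : ι} {x : α} (hx : x ∈ D j) :
    ∑ i, (D i).indicator (fun _ => c i) x = c j := by
  rw [Finset.sum_eq_single j (fun i _ hij => indicator_of_notMem
    (disjoint_right.1 (hD hij) hx) _) (by simp), indicator_of_mem hx]

theorem stmt_7_general {Ω : Type*} [MeasurableSpace Ω] (T : Ω → Ω) (hT : Measurable T)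
    (Θ : Set (Measure Ω))
    (hprob : ∀ P ∈ Θ, IsProbabilityMeasure P)
    (V : Set Ω → ℝ≥0∞)
    (hV : ∀ A : Set Ω, V A = ⨆ P ∈ Θ, P A)
    (hmax : ∀ P : Measure Ω, IsProbabilityMeasure P →
      (∀ A, MeasurableSet A → P A ≤ V A) → P ∈ Θ)
    (hcont : ∀ A : ℕ → Set Ω, (∀ n, MeasurableSet (A n)) → Antitone A →
      (⋂ n, A n) = ∅ → Tendsto (fun n => V (A n)) atTop (nhds 0))
    (hVinv : ∀ A : Set Ω, MeasurableSet A → V (T ⁻¹' A) = V A)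
    (hVerg : ∀ A : Set Ω, MeasurableSet A → T ⁻¹' A = A → V A = 0 ∨ V A = 1)
    (m : ℕ) (Ps : Fin m → Measure Ω)
    (hPsRange : Set.range Ps = {P ∈ Θ |
      (∀ A : Set Ω, MeasurableSet A → P (T ⁻¹' A) = P A) ∧
      (∀ A : Set Ω, MeasurableSet A → T ⁻¹' A = A → P A = 0 ∨ P A = 1)})
    (D : Fin m → Set Ω) (hDmeas : ∀ i, MeasurableSet (D i))
    (hDinv : ∀ i, T ⁻¹' (D i) = D i)
    (hDdisj : Pairwise (Function.onFun Disjoint D))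
    (hDfull : ∀ i, Ps i (D i) = 1)
    (P : Measure Ω) (hP : P ∈ Θ)
    (ξ : Ω → ℝ) (hξmeas : Measurable ξ) (C : ℝ) (hξbdd : ∀ ω, |ξ ω| ≤ C) :
    ∀ᵐ ω ∂P,
      Tendsto (fun n : ℕ => (∑ k ∈ Finset.range n, ξ (T^[k] ω)) / n) atTop
        (nhds (∑ i, (D i).indicator (fun _ => ∫ ω', ξ ω' ∂(Ps i)) ω)) := by
  set L : Ω → ℝ := fun ω => ∑ i, (D i).indicator (fun _ => ∫ ω', ξ ω' ∂(Ps i)) ω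
  set Good := {ω | Tendsto (birkhoffAverage ℝ T ξ · ω) atTop (𝓝 (L ω))}
  have hGood : MeasurableSet Good := measurableSet_tendsto_fun
    (measurable_birkhoffAverage hT hξmeas) (Finset.measurable_sum _ fun i _ =>
      measurable_const.indicator (hDmeas i))
  have hBadinv : T ⁻¹' Goodᶜ = Goodᶜ := by
    rw [preimage_compl, preimage_setOf_tendsto_birkhoffAverage hξbdd fun ω =>
      Finset.sum_congr rfl fun i _ => by rw [← indicator_comp_right, hDinv i]; rfl]
  have hBad : V Goodᶜ = 0 := by
    refine (hVerg _ hGood.compl hBadinv).resolve_right fun hBad1 => ?_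
    obtain ⟨R, hRΘ, hR, hRBad⟩ := exists_ergodic_mem_of_upperProb_eq_one hT hprob hV hmax hcont
      hVinv hVerg hGood.compl hBadinv hBad1
    have := hprob R hRΘ
    obtain ⟨j, rfl⟩ : R ∈ range Ps := hPsRange ▸ ⟨hRΘ,
      fun A hA => hR.measure_preimage hA.nullMeasurableSet,
      fun A hA hAinv => hR.prob_eq_zero_or_one hA hAinv⟩
    have hGoodj : Good ∈ ae (Ps j) := by
      filter_upwards [hR.ae_tendsto_birkhoffAverage hξmeas hξbdd,
        mem_ae_iff.2 ((prob_compl_eq_zero_iff (hDmeas j)).2 (hDfull j))] with ω hω hωD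
      change Tendsto _ atTop (𝓝 (L ω))
      rwa [show L ω = _ from sum_indicator_const_apply_of_mem hDdisj _ hωD]
    simp [mem_ae_iff.1 hGoodj] at hRBad
  have hPBad : P Goodᶜ = 0 :=
    le_antisymm ((hV _ ▸ le_biSup (fun Q : Measure Ω => Q Goodᶜ) hP).trans_eq hBad) zero_le
  filter_upwards [mem_ae_iff.2 hPBad] with ω (hω : Tendsto _ atTop (𝓝 (L ω)))
  simpa only [birkhoffAverage, birkhoffSum, smul_eq_mul, inv_mul_eq_div, L] using hω

/-- With `Θ* = {P_1, …, P_m}` the finite set of `T`-ergodic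
measures in `Θ` and `D_1, …, D_m` pairwise disjoint invariant sets with
`P_i(D_i) = 1`, for every `T`-invariant `P ∈ Θ₀` and bounded measurable `ξ`,
`P`-a.e. the time averages of `ξ` converge to `∑ i, E_{P_i}[ξ] · 1_{D_i}`. -/
theorem stmt_7 {Ω : Type*} [MeasurableSpace Ω] (T : Ω → Ω) (hT : Measurable T)
    (Θ : Set (Measure Ω)) (hΘne : Θ.Nonempty)
    (hprob : ∀ P ∈ Θ, IsProbabilityMeasure P)
    (V : Set Ω → ℝ≥0∞)
    (hV : ∀ A : Set Ω, V A = ⨆ P ∈ Θ, P A)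
    (hmax : ∀ P : Measure Ω, IsProbabilityMeasure P →
      (∀ A, MeasurableSet A → P A ≤ V A) → P ∈ Θ)
    (hcont : ∀ A : ℕ → Set Ω, (∀ n, MeasurableSet (A n)) → Antitone A →
      (⋂ n, A n) = ∅ → Tendsto (fun n => V (A n)) atTop (nhds 0))
    (hVinv : ∀ A : Set Ω, MeasurableSet A → V (T ⁻¹' A) = V A)
    (hVerg : ∀ A : Set Ω, MeasurableSet A → T ⁻¹' A = A → V A = 0 ∨ V A = 1)
    (m : ℕ) (Ps : Fin m → Measure Ω) (hPsInj : Function.Injective Ps)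
    (hPsRange : Set.range Ps = {P ∈ Θ |
      (∀ A : Set Ω, MeasurableSet A → P (T ⁻¹' A) = P A) ∧
      (∀ A : Set Ω, MeasurableSet A → T ⁻¹' A = A → P A = 0 ∨ P A = 1)})
    (D : Fin m → Set Ω) (hDmeas : ∀ i, MeasurableSet (D i))
    (hDinv : ∀ i, T ⁻¹' (D i) = D i)
    (hDdisj : Pairwise (Function.onFun Disjoint D))
    (hDfull : ∀ i, Ps i (D i) = 1)
    (P : Measure Ω) (hP : P ∈ Θ)
    (hPinv : ∀ A : Set Ω, MeasurableSet A → P (T ⁻¹' A) = P A)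
    (ξ : Ω → ℝ) (hξmeas : Measurable ξ) (C : ℝ) (hξbdd : ∀ ω, |ξ ω| ≤ C) :
    ∀ᵐ ω ∂P,
      Tendsto (fun n : ℕ => (∑ k ∈ Finset.range n, ξ (T^[k] ω)) / n) atTop
        (nhds (∑ i, (D i).indicator (fun _ => ∫ ω', ξ ω' ∂(Ps i)) ω)) :=
  stmt_7_general T hT Θ hprob V hV hmax hcont hVinv hVerg m Ps hPsRange D hDmeas hDinv hDdisj hDfull
    P hP ξ hξmeas C hξbdd
end

section
/- Assume 𝕍 is continuous, T-invariant, and T-ergodic. Then for every P ∈ Θ₀ there exists a finite partition {B_1, …, B_n} of Ω with B_k ∈ 𝓘, P(B_k) > 0 for each k, and such that no B_k admits a nontrivial invariant decomposition: for every A ∈ 𝓘 with A ⊆ B_k, either P(A) = 0 or P(A) = P(B_k). -/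
/-!
Every invariant set of positive `P`-measure has upper probability `1` by ergodicity, so the
tails `⋃ k ≥ n, D k` of a pairwise disjoint sequence of such sets keep `𝕍`-value `≥ 1` while
decreasing to `∅`, contradicting continuity of `𝕍`. Hence there is no infinite pairwise disjoint
sequence of invariant sets of positive measure. If `Ω` had no finite partition into invariant
atoms of `P`, one could split off, again and again, an invariant set of positive measure while
keeping a remainder without such a partition, producing exactly such a sequence.
-/

open MeasureTheory Filter Set Function
open scoped ENNReal

theorem exists_pairwise_disjoint_of_forall_exists_diff {α : Type*} {p q : Set α → Prop}
    (h : ∀ B, p B → ∃ C ⊆ B, q C ∧ p (B \ C)) {B : Set α} (hB : p B) :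
    ∃ D : ℕ → Set α, (∀ n, q (D n)) ∧ Pairwise (Disjoint on D) := by
  choose! C hCB hqC hpC using h
  let R : ℕ → Set α := fun n => Nat.rec B (fun _ R => R \ C R) n
  have hR : ∀ n, p (R n) := by
    intro n
    induction n with
    | zero => exact hB
    | succ n ih => exact hpC _ ih
  have hR_anti : Antitone R := antitone_nat_of_succ_le fun _ => sdiff_subset
  refine ⟨fun n => C (R n), fun n => hqC _ (hR n), (pairwise_disjoint_on _).2 fun m n hmn => ?_⟩
  exact disjoint_sdiff_right.mono_right ((hCB _ (hR n)).trans (hR_anti hmn))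

theorem not_pairwise_disjoint_of_le_of_tendsto_zero {Ω : Type*} [MeasurableSpace Ω]
    {V : Set Ω → ℝ≥0∞} (hV : Monotone V)
    (hcont : ∀ A : ℕ → Set Ω, (∀ n, MeasurableSet (A n)) → Antitone A →
      (⋂ n, A n) = ∅ → Tendsto (fun n => V (A n)) atTop (nhds 0))
    {ε : ℝ≥0∞} (hε : 0 < ε) {D : ℕ → Set Ω} (hD : ∀ n, MeasurableSet (D n))
    (hDε : ∀ n, ε ≤ V (D n)) : ¬Pairwise (Disjoint on D) := by
  intro hdisj
  let tail : ℕ → Set Ω := fun n => ⋃ k ≥ n, D k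
  have htail_anti : Antitone tail := fun m n hmn =>
    biUnion_mono (fun k hk => le_trans hmn hk) fun _ _ => subset_rfl
  have htail_empty : (⋂ n, tail n) = ∅ := by
    refine eq_empty_of_forall_notMem fun x hx => ?_
    simp only [tail, mem_iInter, mem_iUnion] at hx
    obtain ⟨k, -, hk⟩ := hx 0
    obtain ⟨l, hl, hl'⟩ := hx (k + 1)
    exact (hdisj (by omega : k ≠ l)).ne_of_mem hk hl' rfl
  have hlim := hcont tail (fun n => .iUnion fun k => .iUnion fun _ => hD k) htail_anti htail_empty
  obtain ⟨n, hn⟩ := (hlim.eventually (gt_mem_nhds hε)).exists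
  exact ((hDε n).trans (hV (subset_biUnion_of_mem (u := D) le_rfl))).not_gt hn

theorem Finset.exists_fin_pairwise_disjoint {α : Type*} {p : Set α → Prop}
    (s : Finset (Set α)) (hp : ∀ b ∈ s, p b) (hs : (s : Set (Set α)).PairwiseDisjoint id) :
    ∃ (n : ℕ) (B : Fin n → Set α),
      (∀ k, p (B k)) ∧ Pairwise (Disjoint on B) ∧ ⋃ k, B k = ⋃₀ ↑s := by
  let e := s.equivFin.symm
  refine ⟨s.card, fun k => e k, fun k => hp _ (e k).2,
    fun k l hkl => hs (e k).2 (e l).2 fun h => hkl (e.injective (Subtype.ext h)), ?_⟩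
  rw [sUnion_eq_iUnion]
  exact e.iSup_comp (g := fun b : ↥(s : Set (Set α)) => (b : Set α))

namespace MeasureTheory

variable {Ω : Type*} {m m0 : MeasurableSpace Ω} {μ : Measure[m0] Ω}

def IsAtomOf (m : MeasurableSpace Ω) (μ : Measure[m0] Ω) (B : Set Ω) : Prop :=
  MeasurableSet[m] B ∧ 0 < μ B ∧ ∀ A, MeasurableSet[m] A → A ⊆ B → μ A = 0 ∨ μ A = μ B

def HasFiniteAtomPartition (m : MeasurableSpace Ω) (μ : Measure[m0] Ω) (B : Set Ω) : Prop :=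
  ∃ s : Finset (Set Ω), (∀ b ∈ s, IsAtomOf m μ b) ∧
    (s : Set (Set Ω)).PairwiseDisjoint id ∧ ⋃₀ ↑s = B

theorem IsAtomOf.hasFiniteAtomPartition {B : Set Ω} (hB : IsAtomOf m μ B) :
    HasFiniteAtomPartition m μ B := by
  classical
  exact ⟨{B}, by simpa using hB, by simp, by simp⟩

theorem HasFiniteAtomPartition.union {A B : Set Ω} (hA : HasFiniteAtomPartition m μ A)
    (hB : HasFiniteAtomPartition m μ B) (hAB : Disjoint A B) :
    HasFiniteAtomPartition m μ (A ∪ B) := by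
  classical
  obtain ⟨s, hs_atom, hs_disj, rfl⟩ := hA
  obtain ⟨t, ht_atom, ht_disj, rfl⟩ := hB
  refine ⟨s ∪ t, fun b hb => (Finset.mem_union.1 hb).elim (hs_atom b) (ht_atom b), ?_, ?_⟩
  · rw [Finset.coe_union]
    exact hs_disj.union ht_disj fun a ha b hb _ =>
      hAB.mono (subset_sUnion_of_mem ha) (subset_sUnion_of_mem hb)
  · rw [Finset.coe_union, sUnion_union]

theorem exists_subset_pos_diff_pos_of_not_isAtomOf {B : Set Ω} (hB : MeasurableSet[m] B)
    (hμB : 0 < μ B) (hnot : ¬IsAtomOf m μ B) :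
    ∃ A ⊆ B, MeasurableSet[m] A ∧ 0 < μ A ∧ 0 < μ (B \ A) := by
  simp only [IsAtomOf, hB, hμB, true_and, not_forall, not_or] at hnot
  obtain ⟨A, hA, hAB, hμA, hμAB⟩ := hnot
  refine ⟨A, hAB, hA, pos_iff_ne_zero.2 hμA, pos_iff_ne_zero.2 fun hdiff => hμAB ?_⟩
  refine le_antisymm (measure_mono hAB) ?_
  calc μ B = μ (A ∪ B \ A) := by rw [union_sdiff_cancel hAB]
    _ ≤ μ A + μ (B \ A) := measure_union_le A (B \ A)
    _ = μ A := by rw [hdiff, add_zero]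

theorem hasFiniteAtomPartition_of_not_pairwise_disjoint
    (h : ∀ D : ℕ → Set Ω, (∀ n, MeasurableSet[m] (D n) ∧ 0 < μ (D n)) →
      ¬Pairwise (Disjoint on D))
    {B : Set Ω} (hB : MeasurableSet[m] B) (hμB : 0 < μ B) : HasFiniteAtomPartition m μ B := by
  by_contra hB_bad
  refine (exists_pairwise_disjoint_of_forall_exists_diff
    (p := fun B => MeasurableSet[m] B ∧ 0 < μ B ∧ ¬HasFiniteAtomPartition m μ B)
    (q := fun C => MeasurableSet[m] C ∧ 0 < μ C) ?_ ⟨hB, hμB, hB_bad⟩).elim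
    fun D ⟨hD, hdisj⟩ => h D hD hdisj
  rintro B ⟨hB, hμB, hB_bad⟩
  obtain ⟨A, hAB, hA, hμA, hμBA⟩ := exists_subset_pos_diff_pos_of_not_isAtomOf hB hμB
    fun hatom => hB_bad hatom.hasFiniteAtomPartition
  by_cases hA_good : HasFiniteAtomPartition m μ A
  · refine ⟨A, hAB, ⟨hA, hμA⟩, hB.diff hA, hμBA, fun hBA_good => hB_bad ?_⟩
    simpa [union_sdiff_cancel hAB] using hA_good.union hBA_good disjoint_sdiff_right
  · refine ⟨B \ A, sdiff_subset, ⟨hB.diff hA, hμBA⟩, ?_⟩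
    rw [sdiff_sdiff_cancel_left hAB]
    exact ⟨hA, hμA, hA_good⟩

end MeasureTheory

theorem stmt_11_general {Ω : Type*} [MeasurableSpace Ω] (T : Ω → Ω)
    (Θ : Set (Measure Ω))
    (hprob : ∀ P ∈ Θ, IsProbabilityMeasure P)
    (V : Set Ω → ℝ≥0∞)
    (hV : ∀ A : Set Ω, V A = ⨆ P ∈ Θ, P A)
    (hcont : ∀ A : ℕ → Set Ω, (∀ n, MeasurableSet (A n)) → Antitone A →
      (⋂ n, A n) = ∅ → Tendsto (fun n => V (A n)) atTop (nhds 0))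
    (hVerg : ∀ A : Set Ω, MeasurableSet A → T ⁻¹' A = A → V A = 0 ∨ V A = 1)
    (P : Measure Ω) (hP : P ∈ Θ) :
    ∃ (n : ℕ) (B : Fin n → Set Ω),
      (∀ k, MeasurableSet (B k) ∧ T ⁻¹' (B k) = B k ∧ 0 < P (B k)) ∧
      Pairwise (Function.onFun Disjoint B) ∧
      (⋃ k, B k) = Set.univ ∧
      (∀ k, ∀ A : Set Ω, MeasurableSet A → T ⁻¹' A = A → A ⊆ B k →
        P A = 0 ∨ P A = P (B k)) := by
  have := hprob P hP
  have hV_mono : Monotone V := fun A B hAB => by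
    simp only [hV]
    exact iSup₂_mono fun Q _ => measure_mono hAB
  have hno_seq : ∀ D : ℕ → Set Ω,
      (∀ n, MeasurableSet[MeasurableSpace.invariants T] (D n) ∧ 0 < P (D n)) →
      ¬Pairwise (Disjoint on D) := by
    intro D hD
    refine not_pairwise_disjoint_of_le_of_tendsto_zero hV_mono hcont one_pos
      (fun n => (hD n).1.1) fun n => ?_
    have hPV : P (D n) ≤ V (D n) := hV (D n) ▸ le_biSup (fun Q : Measure Ω => Q (D n)) hP
    exact ((hVerg _ (hD n).1.1 (hD n).1.2).resolve_left ((hD n).2.trans_le hPV).ne').ge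
  obtain ⟨s, hs_atom, hs_disj, hs_univ⟩ :=
    hasFiniteAtomPartition_of_not_pairwise_disjoint hno_seq MeasurableSet.univ (by simp)
  obtain ⟨n, B, hB, hB_disj, hB_univ⟩ := s.exists_fin_pairwise_disjoint hs_atom hs_disj
  exact ⟨n, B, fun k => ⟨(hB k).1.1, (hB k).1.2, (hB k).2.1⟩, hB_disj, hB_univ.trans hs_univ,
    fun k A hA hA_inv hAB => (hB k).2.2 A ⟨hA, hA_inv⟩ hAB⟩

/-- If `V` is continuous, `T`-invariant and `T`-ergodic, then
every `T`-invariant `P ∈ Θ₀` admits a finite partition of `Ω` into invariant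
sets of positive `P`-measure none of which has a nontrivial invariant
decomposition. -/
theorem stmt_11 {Ω : Type*} [MeasurableSpace Ω] (T : Ω → Ω) (hT : Measurable T)
    (Θ : Set (Measure Ω)) (hΘne : Θ.Nonempty)
    (hprob : ∀ P ∈ Θ, IsProbabilityMeasure P)
    (V : Set Ω → ℝ≥0∞)
    (hV : ∀ A : Set Ω, V A = ⨆ P ∈ Θ, P A)
    (hmax : ∀ P : Measure Ω, IsProbabilityMeasure P →
      (∀ A, MeasurableSet A → P A ≤ V A) → P ∈ Θ)
    (hcont : ∀ A : ℕ → Set Ω, (∀ n, MeasurableSet (A n)) → Antitone A →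
      (⋂ n, A n) = ∅ → Tendsto (fun n => V (A n)) atTop (nhds 0))
    (hVinv : ∀ A : Set Ω, MeasurableSet A → V (T ⁻¹' A) = V A)
    (hVerg : ∀ A : Set Ω, MeasurableSet A → T ⁻¹' A = A → V A = 0 ∨ V A = 1)
    (P : Measure Ω) (hP : P ∈ Θ)
    (hPinv : ∀ A : Set Ω, MeasurableSet A → P (T ⁻¹' A) = P A) :
    ∃ (n : ℕ) (B : Fin n → Set Ω),
      (∀ k, MeasurableSet (B k) ∧ T ⁻¹' (B k) = B k ∧ 0 < P (B k)) ∧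
      Pairwise (Function.onFun Disjoint B) ∧
      (⋃ k, B k) = Set.univ ∧
      (∀ k, ∀ A : Set Ω, MeasurableSet A → T ⁻¹' A = A → A ⊆ B k →
        P A = 0 ∨ P A = P (B k)) :=
  stmt_11_general T Θ hprob V hV hcont hVerg P hP
end
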